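/- arXiv:2503.18268 — 8 statements merged into one kernel-verified Lean document; each statement's English description precedes it below -/
import Mathlib

section
/- Let p ≥ 0, let n_0,…,n_p be positive integers with n_0 + ⋯ + n_p = n, and fix nonnegative integers b, c. Then there exists a polynomial P ∈ ℚ(q)[z] of degree at most nb such that D_n((n_0,…,n_p);a,b,c) = P(q^a) for every nonnegative integer a. -/
/-!
Statement 0: the multi-component q-Baker–Forrester recursion (Theorem 1.8 / thm-1).
We work in the field `F = ℚ(q)` and with Laurent polynomials in variables
`x_1, x_2, …` modelled as the add-monoid algebra of `ℕ →₀ ℤ` over `F`.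
-/

open Finset

noncomputable section

/-- The field `ℚ(q)`. -/
abbrev F : Type := RatFunc ℚ

/-- The indeterminate `q`. -/
def qq : F := RatFunc.X

/-- Laurent polynomials in the variables `x_0, x_1, x_2, …` over `ℚ(q)`. -/
abbrev L : Type := AddMonoidAlgebra F (ℕ →₀ ℤ)

/-- The monomial `x_i ^ z` for `z : ℤ`. -/
def Xz (i : ℕ) (z : ℤ) : L := AddMonoidAlgebra.single (Finsupp.single i z) 1

/-- The variable `x_i`. -/
def X (i : ℕ) : L := Xz i 1

/-- The monomial `x_i⁻¹`. -/
def Xinv (i : ℕ) : L := Xz i (-1)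

/-- The scalar `q ^ z` (for `z : ℤ`) viewed inside `L`. -/
def qC (z : ℤ) : L := algebraMap F L (qq ^ z)

/-- The constant term of a Laurent polynomial: the coefficient of `x_1^0 ⋯ x_n^0`. -/
def CT (f : L) : F := f.coeff 0

/-- The q-shifted factorial `(t; q)_z` inside `L`. -/
def poch (t : L) (z : ℕ) : L := ∏ m ∈ Finset.range z, (1 - t * qC m)

/-- The q-shifted factorial `(A; q)_z` inside `F`. -/
def qPochF (A : F) (z : ℕ) : F := ∏ m ∈ Finset.range z, (1 - A * qq ^ m)

/-- The q-binomial coefficient `[n choose c]_q = (q^{n-c+1};q)_c / (q;q)_c`. -/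
def qbinom (n c : ℕ) : F := qPochF (qq ^ ((n : ℤ) - c + 1)) c / qPochF qq c

/-- `σ_l = n_0 + n_1 + ⋯ + n_l`. -/
def sigmaSum (nn : ℕ → ℕ) (l : ℕ) : ℕ := ∑ i ∈ Finset.range (l + 1), nn i

/-- `i` and `j` lie in a common block `N_l = {σ_{l-1}+1, …, σ_l}` for some `l ∈ {1,…,p}`. -/
def sameBlock (p : ℕ) (nn : ℕ → ℕ) (i j : ℕ) : Prop :=
  ∃ l, 1 ≤ l ∧ l ≤ p ∧ i ∈ Finset.Ioc (sigmaSum nn (l - 1)) (sigmaSum nn l) ∧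
    j ∈ Finset.Ioc (sigmaSum nn (l - 1)) (sigmaSum nn l)

open Classical in
/-- `ε_{ij}`. -/
def eps (p : ℕ) (nn : ℕ → ℕ) (i j : ℕ) : ℕ := if sameBlock p nn i j then 1 else 0

/-- The set of pairs `(i, j)` with `1 ≤ i < j ≤ n`. -/
def pairs (n : ℕ) : Finset (ℕ × ℕ) :=
  (Finset.Icc 1 n ×ˢ Finset.Icc 1 n).filter fun ij => ij.1 < ij.2

/-- `∏_{1 ≤ i < j ≤ n} (x_i/x_j; q)_{c+ε_{ij}} (q x_j/x_i; q)_{c+ε_{ij}}`. -/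
def BF (p : ℕ) (nn : ℕ → ℕ) (c : ℕ) : L :=
  ∏ ij ∈ pairs (sigmaSum nn p),
    poch (X ij.1 * Xinv ij.2) (c + eps p nn ij.1 ij.2) *
      poch (qC 1 * X ij.2 * Xinv ij.1) (c + eps p nn ij.1 ij.2)

/-- The Baker–Forrester constant term
`D_n((n_0,…,n_p); a, b, c) = CT ∏_{i=1}^n (1/x_i;q)_a (q x_i;q)_b ∏_{i<j} (…)`. -/
def Dn (p : ℕ) (nn : ℕ → ℕ) (a b c : ℕ) : F :=
  CT ((∏ i ∈ Finset.Icc 1 (sigmaSum nn p), poch (Xinv i) a * poch (qC 1 * X i) b) *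
    BF p nn c)

section Aux
open AddMonoidAlgebra

/-- Total degree of a monomial exponent vector. -/
def tdeg (μ : ℕ →₀ ℤ) : ℤ := μ.sum fun _ v => v

lemma tdeg_zero : tdeg 0 = 0 := by simp [tdeg]

lemma tdeg_add (μ ν : ℕ →₀ ℤ) : tdeg (μ + ν) = tdeg μ + tdeg ν :=
  Finsupp.sum_add_index (by simp) (by simp)

lemma tdeg_single (i : ℕ) (z : ℤ) : tdeg (Finsupp.single i z) = z := by
  simp [tdeg, Finsupp.sum_single_index]

lemma tdeg_neg (μ : ℕ →₀ ℤ) : tdeg (-μ) = - tdeg μ := by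
  have h := tdeg_add μ (-μ)
  rw [add_neg_cancel, tdeg_zero] at h
  linarith

/-- All monomials appearing in `f` have total degree at most `d`. -/
def Bdd (f : L) (d : ℤ) : Prop := ∀ μ ∈ f.coeff.support, tdeg μ ≤ d

lemma Bdd.mono {f : L} {d e : ℤ} (h : Bdd f d) (hde : d ≤ e) : Bdd f e :=
  fun μ hμ => (h μ hμ).trans hde

lemma Bdd.mul {f g : L} {d e : ℤ} (hf : Bdd f d) (hg : Bdd g e) : Bdd (f * g) (d + e) := by
  intro μ hμ
  have h := AddMonoidAlgebra.support_coeff_mul_subset f g hμ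
  rw [Finset.mem_add] at h
  obtain ⟨x, hx, y, hy, rfl⟩ := h
  rw [tdeg_add]
  exact add_le_add (hf x hx) (hg y hy)

lemma Bdd_single (x : ℕ →₀ ℤ) (c : F) : Bdd (AddMonoidAlgebra.single x c : L) (tdeg x) := by
  intro μ hμ
  have := Finsupp.support_single_subset hμ
  simp only [Finset.mem_singleton] at this
  subst this; exact le_rfl

lemma Bdd_one : Bdd (1 : L) 0 := by
  have := Bdd_single 0 1
  rwa [tdeg_zero] at this

lemma Bdd_sub {f g : L} {d : ℤ} (hf : Bdd f d) (hg : Bdd g d) : Bdd (f - g) d := by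
  intro μ hμ
  rw [AddMonoidAlgebra.coeff_sub] at hμ
  have := Finsupp.support_sub hμ
  rw [Finset.mem_union] at this
  rcases this with h | h
  · exact hf μ h
  · exact hg μ h

lemma Bdd_prod {ι : Type} {s : Finset ι} {f : ι → L} {d : ι → ℤ}
    (h : ∀ i ∈ s, Bdd (f i) (d i)) : Bdd (∏ i ∈ s, f i) (∑ i ∈ s, d i) := by
  classical
  induction s using Finset.induction_on with
  | empty => simpa using Bdd_one
  | @insert a s' hx ih =>
    rw [Finset.prod_insert hx, Finset.sum_insert hx]
    exact (h a (Finset.mem_insert_self a s')).mul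
      (ih fun i hi => h i (Finset.mem_insert_of_mem hi))

lemma Bdd_Xz (i : ℕ) (z : ℤ) : Bdd (Xz i z) z := by
  have := Bdd_single (Finsupp.single i z) 1
  rwa [tdeg_single] at this

lemma algebraMap_L (z : F) :
    algebraMap F L z = AddMonoidAlgebra.single 0 z := rfl

lemma Bdd_qC (z : ℤ) : Bdd (qC z) 0 := by
  rw [qC, algebraMap_L]
  have := Bdd_single (0 : ℕ →₀ ℤ) (qq ^ z)
  rwa [tdeg_zero] at this

lemma Bdd_poch {t : L} {d : ℤ} (hd : 0 ≤ d) (ht : Bdd t d) (z : ℕ) :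
    Bdd (poch t z) ((z : ℤ) * d) := by
  have hsum : ((z : ℤ) * d) = ∑ _m ∈ Finset.range z, d := by
    rw [Finset.sum_const, Finset.card_range, nsmul_eq_mul]
  rw [poch, hsum]
  apply Bdd_prod
  intro m _
  refine Bdd_sub (Bdd_one.mono hd) ?_
  have := ht.mul (Bdd_qC (m : ℤ))
  rwa [add_zero] at this

lemma CT_mul_eq_sum (f g : L) : CT (f * g) = ∑ μ ∈ g.coeff.support, f.coeff (-μ) * g.coeff μ := by
  classical
  rw [CT, AddMonoidAlgebra.coeff_mul]
  rw [Finsupp.sum]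
  simp only [Finsupp.sum]
  rw [Finset.sum_comm]
  refine Finset.sum_congr rfl fun μ _ => ?_
  have : ∀ x : ℕ →₀ ℤ, (x + μ = 0) ↔ (x = -μ) := fun x => by
    constructor
    · intro h; linear_combination (norm := abel) h
    · intro h; subst h; abel
  simp only [this]
  rw [Finset.sum_ite_eq']
  by_cases h : -μ ∈ f.coeff.support
  · simp [h]
  · rw [Finsupp.notMem_support_iff.mp h, zero_mul, if_neg h]

lemma CT_vanish {f g : L} (hf : Bdd f 0) (hg : ∀ μ ∈ g.coeff.support, tdeg μ < 0) :
    CT (f * g) = 0 := by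
  rw [CT_mul_eq_sum]
  apply Finset.sum_eq_zero
  intro μ hμ
  have h1 : -μ ∉ f.coeff.support := by
    intro h
    have := hf _ h
    rw [tdeg_neg] at this
    linarith [hg μ hμ]
  rw [Finsupp.notMem_support_iff.mp h1, zero_mul]

lemma CT_sum {ι : Type} (s : Finset ι) (f : ι → L) :
    CT (∑ i ∈ s, f i) = ∑ i ∈ s, CT (f i) := by
  simp only [CT, AddMonoidAlgebra.coeff_sum, Finsupp.finset_sum_apply]

lemma CT_algebraMap_mul (z : F) (h : L) : CT (algebraMap F L z * h) = z * CT h := by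
  rw [algebraMap_L, CT, CT, AddMonoidAlgebra.coeff_single_zero_mul]

end Aux

section Rec
open AddMonoidAlgebra

/-- `A_a = ∏_{i ∈ s} (1/x_i; q)_a`. -/
def AA (s : Finset ℕ) (a : ℕ) : L := ∏ i ∈ s, poch (Xinv i) a

/-- `Φ_s(G, a) = CT(A_a · G)`. -/
def Phi (s : Finset ℕ) (G : L) (a : ℕ) : F := CT (AA s a * G)

lemma Bdd_AA (s : Finset ℕ) (a : ℕ) : Bdd (AA s a) 0 := by
  have h : Bdd (AA s a) (∑ _i ∈ s, (0 : ℤ)) := by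
    apply Bdd_prod
    intro i _
    have h1 : Bdd (Xinv i) 0 := (Bdd_Xz i (-1)).mono (by norm_num)
    have := Bdd_poch le_rfl h1 a
    rwa [mul_zero] at this
  rwa [Finset.sum_const, smul_zero] at h

lemma Phi_vanish {s : Finset ℕ} {G : L} (hG : ∀ μ ∈ G.coeff.support, tdeg μ < 0) (a : ℕ) :
    Phi s G a = 0 := CT_vanish (Bdd_AA s a) hG

lemma AA_succ (s : Finset ℕ) (a : ℕ) :
    AA s (a + 1) = AA s a * ∏ i ∈ s, (1 - Xinv i * qC a) := by
  rw [AA, AA, ← Finset.prod_mul_distrib]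
  refine Finset.prod_congr rfl fun i _ => ?_
  rw [poch, poch, Finset.prod_range_succ]

lemma W_expand (s : Finset ℕ) (a : ℕ) :
    ∏ i ∈ s, ((1 : L) - Xinv i * qC a) =
    ∑ T ∈ s.powerset,
      algebraMap F L ((-1) ^ T.card * (qq ^ (a : ℤ)) ^ T.card) * ∏ i ∈ T, Xinv i := by
  classical
  have h1 : ∀ i ∈ s, (1 : L) - Xinv i * qC a
      = algebraMap F L (-(qq ^ (a : ℤ))) * Xinv i + 1 := by
    intro i _
    rw [map_neg, qC, neg_mul]
    ring
  rw [Finset.prod_congr rfl h1, Finset.prod_add]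
  refine Finset.sum_congr rfl fun T _ => ?_
  rw [Finset.prod_const_one, mul_one, Finset.prod_mul_distrib, Finset.prod_const,
    ← map_pow, neg_pow]

lemma Phi_succ_expand (s : Finset ℕ) (G : L) (a : ℕ) :
    Phi s G (a + 1) =
    ∑ T ∈ s.powerset,
      ((-1 : F) ^ T.card * (qq ^ a) ^ T.card) * Phi s ((∏ i ∈ T, Xinv i) * G) a := by
  rw [Phi, AA_succ, W_expand, mul_assoc, Finset.sum_mul, Finset.mul_sum, CT_sum]
  refine Finset.sum_congr rfl fun T _ => ?_
  have h2 : AA s a * (algebraMap F L ((-1) ^ T.card * (qq ^ (a : ℤ)) ^ T.card)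
        * (∏ i ∈ T, Xinv i) * G)
      = algebraMap F L ((-1) ^ T.card * (qq ^ (a : ℤ)) ^ T.card)
        * (AA s a * ((∏ i ∈ T, Xinv i) * G)) := by ring
  rw [h2, CT_algebraMap_mul, ← Phi, zpow_natCast]

lemma Bdd_prodXinv (T : Finset ℕ) : Bdd (∏ i ∈ T, Xinv i) (-(T.card : ℤ)) := by
  have h : Bdd (∏ i ∈ T, Xinv i) (∑ _i ∈ T, (-1 : ℤ)) :=
    Bdd_prod fun i _ => Bdd_Xz i (-1)
  have : (∑ _i ∈ T, (-1 : ℤ)) = -(T.card : ℤ) := by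
    rw [Finset.sum_const]; simp
  rwa [this] at h

end Rec

section Main
open AddMonoidAlgebra

lemma qq_pow_ne_one {m : ℕ} (hm : 1 ≤ m) : qq ^ m ≠ (1 : F) := by
  intro h
  have h2 : (algebraMap (Polynomial ℚ) (RatFunc ℚ)) (Polynomial.X ^ m)
      = algebraMap (Polynomial ℚ) (RatFunc ℚ) 1 := by
    rw [map_pow, RatFunc.algebraMap_X, map_one]; exact h
  have h3 := IsFractionRing.injective (Polynomial ℚ) (RatFunc ℚ) h2
  have h4 : (Polynomial.X ^ m : Polynomial ℚ).coeff 0 = (1 : Polynomial ℚ).coeff 0 := by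
    rw [h3]
  rw [Polynomial.coeff_X_pow, if_neg (by omega), Polynomial.coeff_one, if_pos rfl] at h4
  exact zero_ne_one h4

lemma Phi_polynomial (s : Finset ℕ) : ∀ d : ℕ, ∀ G : L, Bdd G (d : ℤ) →
    ∃ P : Polynomial F, P.natDegree ≤ d ∧ ∀ a : ℕ, Phi s G a = Polynomial.eval (qq ^ a) P := by
  intro d
  induction d using Nat.strong_induction_on with
  | _ d IH =>
  intro G hG
  classical
  -- polynomials for the lower-order terms
  have hQ : ∀ T : Finset ℕ, ∃ Q : Polynomial F, T.Nonempty →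
      ((Polynomial.X ^ T.card * Q).natDegree ≤ d ∧
        ∀ a : ℕ, Phi s ((∏ i ∈ T, Xinv i) * G) a = Polynomial.eval (qq ^ a) Q) := by
    intro T
    by_cases hne : T.Nonempty
    · have hc1 : 1 ≤ T.card := Finset.Nonempty.card_pos hne
      have hBdd : Bdd ((∏ i ∈ T, Xinv i) * G) (-(T.card : ℤ) + d) :=
        (Bdd_prodXinv T).mul hG
      by_cases hcard : T.card ≤ d
      · obtain ⟨Q, hdeg, heval⟩ := IH (d - T.card) (by omega) _
          (hBdd.mono (by push_cast [Nat.cast_sub hcard]; omega))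
        refine ⟨Q, fun _ => ⟨?_, heval⟩⟩
        calc (Polynomial.X ^ T.card * Q).natDegree
            ≤ (Polynomial.X ^ T.card : Polynomial F).natDegree + Q.natDegree :=
              Polynomial.natDegree_mul_le
          _ ≤ T.card + (d - T.card) := by
              rw [Polynomial.natDegree_X_pow]; exact Nat.add_le_add_left hdeg _
          _ ≤ d := by omega
      · refine ⟨0, fun _ => ⟨by simp, fun a => ?_⟩⟩
        rw [Phi_vanish, Polynomial.eval_zero]
        intro μ hμ
        have := hBdd μ hμ
        omega
    · exact ⟨0, fun h => absurd h hne⟩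
  choose Q hQ using hQ
  set R : Polynomial F := ∑ T ∈ s.powerset.erase ∅,
    ((-1 : F) ^ T.card) • (Polynomial.X ^ T.card * Q T) with hRdef
  have hmemne : ∀ T ∈ s.powerset.erase ∅, T.Nonempty := by
    intro T hT
    exact Finset.nonempty_iff_ne_empty.mpr (Finset.ne_of_mem_erase hT)
  have hRdeg : R.natDegree ≤ d := by
    apply Polynomial.natDegree_sum_le_of_forall_le
    intro T hT
    exact (Polynomial.natDegree_smul_le _ _).trans ((hQ T (hmemne T hT)).1)
  have hR0 : R.coeff 0 = 0 := by
    rw [hRdef, Polynomial.finset_sum_coeff]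
    apply Finset.sum_eq_zero
    intro T hT
    have hc1 : 1 ≤ T.card := Finset.Nonempty.card_pos (hmemne T hT)
    rw [Polynomial.coeff_smul, Polynomial.mul_coeff_zero, Polynomial.coeff_X_pow,
      if_neg (by omega)]
    simp
  -- the recursion
  have hRec : ∀ a : ℕ, Phi s G (a + 1) = Phi s G a + Polynomial.eval (qq ^ a) R := by
    intro a
    rw [Phi_succ_expand,
      ← Finset.add_sum_erase _ _ (Finset.empty_mem_powerset s)]
    congr 1
    · simp
    · rw [hRdef, Polynomial.eval_finset_sum]
      refine Finset.sum_congr rfl fun T hT => ?_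
      rw [(hQ T (hmemne T hT)).2 a]
      simp only [Polynomial.eval_smul, Polynomial.eval_mul, Polynomial.eval_pow,
        Polynomial.eval_X, smul_eq_mul]
      ring
  -- solve the q-difference equation
  set S : Polynomial F := ∑ m ∈ Finset.Icc 1 d,
    Polynomial.C (R.coeff m / (qq ^ m - 1)) * Polynomial.X ^ m with hSdef
  have hSdeg : S.natDegree ≤ d := by
    apply Polynomial.natDegree_sum_le_of_forall_le
    intro m hm
    calc (Polynomial.C (R.coeff m / (qq ^ m - 1)) * Polynomial.X ^ m).natDegree
        ≤ (Polynomial.C (R.coeff m / (qq ^ m - 1))).natDegree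
            + (Polynomial.X ^ m : Polynomial F).natDegree := Polynomial.natDegree_mul_le
      _ ≤ m := by rw [Polynomial.natDegree_C, Polynomial.natDegree_X_pow, zero_add]
      _ ≤ d := (Finset.mem_Icc.mp hm).2
  have hS : ∀ z : F, Polynomial.eval (qq * z) S = Polynomial.eval z S + Polynomial.eval z R := by
    intro z
    have hR : Polynomial.eval z R = ∑ m ∈ Finset.Icc 1 d, R.coeff m * z ^ m := by
      rw [Polynomial.eval_eq_sum_range' (Nat.lt_succ_of_le hRdeg)]
      have hins : Finset.range (d + 1) = insert 0 (Finset.Icc 1 d) := by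
        ext x
        simp only [Finset.mem_range, Finset.mem_insert, Finset.mem_Icc]
        omega
      rw [hins, Finset.sum_insert (by simp), hR0, zero_mul, zero_add]
    rw [hR]
    simp only [hSdef, Polynomial.eval_finset_sum, Polynomial.eval_mul, Polynomial.eval_C,
      Polynomial.eval_pow, Polynomial.eval_X]
    rw [← Finset.sum_add_distrib]
    refine Finset.sum_congr rfl fun m hm => ?_
    have hne : qq ^ m - 1 ≠ 0 := sub_ne_zero.mpr (qq_pow_ne_one (Finset.mem_Icc.mp hm).1)
    field_simp
    ring
  -- the polynomial
  refine ⟨Polynomial.C (Phi s G 0 - Polynomial.eval 1 S) + S, ?_, ?_⟩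
  · apply (Polynomial.natDegree_add_le _ _).trans
    simp only [Polynomial.natDegree_C]
    omega
  · intro a
    induction a with
    | zero => simp
    | succ a ih =>
      rw [hRec a, ih]
      have : qq ^ (a + 1) = qq * qq ^ a := by rw [pow_succ]; ring
      rw [this]
      simp only [Polynomial.eval_add, Polynomial.eval_C]
      rw [hS (qq ^ a)]
      ring

end Main

/-- **Polynomiality of `D_n`** (Corollary 2.2 / cor-poly): for fixed `b, c` there is a
polynomial `P ∈ ℚ(q)[z]` of degree at most `n·b` with `D_n((n_0,…,n_p);a,b,c) = P(q^a)`
for every nonnegative integer `a`. -/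
theorem Dn_polynomiality
    (p : ℕ) (nn : ℕ → ℕ) (hpos : ∀ i ≤ p, 1 ≤ nn i) (b c : ℕ) :
    ∃ P : Polynomial F, P.natDegree ≤ sigmaSum nn p * b ∧
      ∀ a : ℕ, Dn p nn a b c = Polynomial.eval (qq ^ a) P := by
  classical
  set n := sigmaSum nn p with hn
  set Gfix : L := (∏ i ∈ Finset.Icc 1 n, poch (qC 1 * X i) b) * BF p nn c with hGfix
  have h1 : Bdd (∏ i ∈ Finset.Icc 1 n, poch (qC 1 * X i) b) ((n : ℤ) * b) := by
    have hb : Bdd (∏ i ∈ Finset.Icc 1 n, poch (qC 1 * X i) b)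
        (∑ _i ∈ Finset.Icc 1 n, (b : ℤ)) := by
      apply Bdd_prod
      intro i _
      have ht : Bdd (qC 1 * X i) 1 := by
        have := (Bdd_qC 1).mul (Bdd_Xz i 1)
        rwa [zero_add] at this
      have := Bdd_poch (by norm_num) ht b
      rwa [mul_one] at this
    rwa [Finset.sum_const, Nat.card_Icc, Nat.add_sub_cancel, nsmul_eq_mul] at hb
  have h2 : Bdd (BF p nn c) 0 := by
    rw [BF]
    have hb : Bdd (∏ ij ∈ pairs (sigmaSum nn p),
        poch (X ij.1 * Xinv ij.2) (c + eps p nn ij.1 ij.2) *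
          poch (qC 1 * X ij.2 * Xinv ij.1) (c + eps p nn ij.1 ij.2))
        (∑ _ij ∈ pairs (sigmaSum nn p), (0 : ℤ)) := by
      apply Bdd_prod
      intro ij _
      have ht1 : Bdd (X ij.1 * Xinv ij.2) 0 := by
        have := (Bdd_Xz ij.1 1).mul (Bdd_Xz ij.2 (-1))
        norm_num at this
        exact this
      have ht2 : Bdd (qC 1 * X ij.2 * Xinv ij.1) 0 := by
        have := ((Bdd_qC 1).mul (Bdd_Xz ij.2 1)).mul (Bdd_Xz ij.1 (-1))
        norm_num at this
        exact this
      have hp1 := Bdd_poch le_rfl ht1 (c + eps p nn ij.1 ij.2)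
      have hp2 := Bdd_poch le_rfl ht2 (c + eps p nn ij.1 ij.2)
      rw [mul_zero] at hp1 hp2
      have := hp1.mul hp2
      rwa [add_zero] at this
    rwa [Finset.sum_const, smul_zero] at hb
  have hBdd : Bdd Gfix ((n * b : ℕ) : ℤ) := by
    have := h1.mul h2
    rw [add_zero] at this
    rwa [Nat.cast_mul]
  obtain ⟨P, hdeg, heval⟩ := Phi_polynomial (Finset.Icc 1 n) (n * b) Gfix hBdd
  refine ⟨P, hdeg, fun a => ?_⟩
  rw [← heval a, Dn, Phi, AA, hGfix]
  rw [Finset.prod_mul_distrib, mul_assoc]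

end
end

section
/- Let p ≥ 1, let n_0,…,n_p be positive integers with n_0 + ⋯ + n_p = n, let c be a nonnegative integer, let k ∈ {1,…,p} satisfy n_k = max{n_1,…,n_p}, and set σ_l = n_0 + n_1 + ⋯ + n_l. Fix i with σ_{k−1} < i ≤ σ_k and an integer j with −1 ≤ j ≤ c−1. Then the rational function S·(1 − q^j y/x_i) has no pole along y = q^{−j} x_i, and its value at y = q^{−j} x_i equals A^{(k)}_{ij} := [∏_{1≤u<v≤n, u,v≠i} (x_u/x_v;q)_{c+ε_{uv}} (q x_v/x_u;q)_{c+ε_{uv}}] / [(q^{−j−1};q)_{j+1} (q;q)_{c−j−1}] · ∏_{l=1}^{σ_{k−1}} q^{c(j+1)} (q^{−c} x_l/x_i;q)_{j+1} (q^{j+1} x_l/x_i;q)_{c−j−1} · ∏_{l=σ_{k−1}+1}^{i−1} q^{(c+1)(j+2)} (q^{−c−1} x_l/x_i;q)_{j+2} (q^{j+2} x_l/x_i;q)_{c−j−1} · ∏_{l=i+1}^{σ_k} q^{(c+1)(j+1)} (q^{−c} x_l/x_i;q)_{j+1} (q^{j+2} x_l/x_i;q)_{c−j} · ∏_{l=σ_k+1}^{n}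 q^{c(j+1)} (q^{1−c} x_l/x_i;q)_{j+1} (q^{j+2} x_l/x_i;q)_{c−j−1}. -/
/-!
Statement 0: the multi-component q-Baker–Forrester recursion (Theorem 1.8 / thm-1).
We work in the field `F = ℚ(q)` and with Laurent polynomials in variables
`x_1, x_2, …` modelled as the add-monoid algebra of `ℕ →₀ ℤ` over `F`.
-/

open Finset

noncomputable section

/-- Substitution `y = e · x_i` (with `y = x_0`): each monomial
`y^{m} · (monomial in the x's)` is sent to `e^{m} x_i^{m} · (monomial in the x's)`. -/
def substY (i : ℕ) (e : F) (f : L) : L :=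
  Finsupp.sum f.coeff fun v cf =>
    AddMonoidAlgebra.single (v + Finsupp.single i (v 0) - Finsupp.single 0 (v 0))
      (cf * e ^ v 0)

/-- The denominator of `S` (see (3.1) / def-L) with the factor `(1 - q^j y/x_i)`
removed; here `y = x_0` and `i ∈ N_k`, `-1 ≤ j ≤ c-1`. -/
def denomS' (p : ℕ) (nn : ℕ → ℕ) (c k i : ℕ) (j : ℤ) : L :=
  (∏ l ∈ Finset.Icc 1 (sigmaSum nn (k - 1)), poch (X 0 * Xinv l) c) *
    (∏ l ∈ (Finset.Icc (sigmaSum nn (k - 1) + 1) (sigmaSum nn k)).erase i,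
      poch (qC (-1) * X 0 * Xinv l) (c + 1)) *
    (∏ m ∈ (Finset.range (c + 1)).erase (j + 1).toNat,
      (1 - qC ((m : ℤ) - 1) * X 0 * Xinv i)) *
    ∏ l ∈ Finset.Icc (sigmaSum nn k + 1) (sigmaSum nn p),
      poch (qC (-1) * X 0 * Xinv l) c

/-- `∏_{1≤u<v≤n, u,v≠i} (x_u/x_v;q)_{c+ε_{uv}} (q x_v/x_u;q)_{c+ε_{uv}}`. -/
def BFavoid (p : ℕ) (nn : ℕ → ℕ) (c i : ℕ) : L :=
  ∏ uv ∈ (pairs (sigmaSum nn p)).filter fun uv => uv.1 ≠ i ∧ uv.2 ≠ i,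
    poch (X uv.1 * Xinv uv.2) (c + eps p nn uv.1 uv.2) *
      poch (qC 1 * X uv.2 * Xinv uv.1) (c + eps p nn uv.1 uv.2)

/-- The coefficient `A^{(k)}_{ij}` of formula (3.4) / A-2. -/
def Akij (p : ℕ) (nn : ℕ → ℕ) (c k i : ℕ) (j : ℤ) : L :=
  algebraMap F L
      ((qPochF (qq ^ (-j - 1)) (j + 1).toNat * qPochF qq ((c : ℤ) - j - 1).toNat)⁻¹) *
    BFavoid p nn c i *
    (∏ l ∈ Finset.Icc 1 (sigmaSum nn (k - 1)),
      qC ((c : ℤ) * (j + 1)) * poch (qC (-(c : ℤ)) * X l * Xinv i) (j + 1).toNat *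
        poch (qC (j + 1) * X l * Xinv i) ((c : ℤ) - j - 1).toNat) *
    (∏ l ∈ Finset.Icc (sigmaSum nn (k - 1) + 1) (i - 1),
      qC (((c : ℤ) + 1) * (j + 2)) * poch (qC (-(c : ℤ) - 1) * X l * Xinv i) (j + 2).toNat *
        poch (qC (j + 2) * X l * Xinv i) ((c : ℤ) - j - 1).toNat) *
    (∏ l ∈ Finset.Icc (i + 1) (sigmaSum nn k),
      qC (((c : ℤ) + 1) * (j + 1)) * poch (qC (-(c : ℤ)) * X l * Xinv i) (j + 1).toNat *
        poch (qC (j + 2) * X l * Xinv i) ((c : ℤ) - j).toNat) *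
    ∏ l ∈ Finset.Icc (sigmaSum nn k + 1) (sigmaSum nn p),
      qC ((c : ℤ) * (j + 1)) * poch (qC (1 - (c : ℤ)) * X l * Xinv i) (j + 1).toNat *
        poch (qC (j + 2) * X l * Xinv i) ((c : ℤ) - j - 1).toNat


/-! ### Auxiliary machinery -/

lemma qq_ne_zero : qq ≠ 0 := RatFunc.X_ne_zero

lemma qq_pow_ne_one_s7 (n : ℕ) (hn : n ≠ 0) : qq ^ n ≠ 1 := by
  intro h
  have h2 : algebraMap (Polynomial ℚ) (RatFunc ℚ) (Polynomial.X ^ n) =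
      algebraMap (Polynomial ℚ) (RatFunc ℚ) 1 := by
    rw [map_pow, RatFunc.algebraMap_X, map_one]; exact h
  have h3 := RatFunc.algebraMap_injective ℚ h2
  have := congrArg Polynomial.natDegree h3
  simp [Polynomial.natDegree_X_pow] at this
  exact hn this

lemma qq_zpow_ne_one (z : ℤ) (hz : z ≠ 0) : qq ^ z ≠ 1 := by
  rcases z with n | n
  · simpa using qq_pow_ne_one_s7 n (by simpa using hz)
  · intro h
    have : (qq ^ (n+1))⁻¹ = 1 := by
      rw [← zpow_natCast, ← zpow_neg]; simpa [Int.negSucc_eq] using h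
    exact qq_pow_ne_one_s7 (n+1) (Nat.succ_ne_zero n) (by rwa [inv_eq_one] at this)

lemma one_sub_qq_zpow_ne_zero (z : ℤ) (hz : z ≠ 0) : (1 : F) - qq ^ z ≠ 0 :=
  sub_ne_zero.mpr (Ne.symm (qq_zpow_ne_one z hz))

lemma qC_add (x y : ℤ) : qC (x + y) = qC x * qC y := by
  unfold qC; rw [zpow_add₀ qq_ne_zero, map_mul]

lemma qC_zero : qC 0 = 1 := by unfold qC; rw [zpow_zero, map_one]

lemma qC_mul_qC_neg (x : ℤ) : qC x * qC (-x) = 1 := by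
  rw [← qC_add]; simp [qC_zero]

lemma Xz_mul (i : ℕ) (z w : ℤ) : Xz i z * Xz i w = Xz i (z + w) := by
  unfold Xz; rw [AddMonoidAlgebra.single_mul_single, Finsupp.single_add, one_mul]

lemma Xz_zero (i : ℕ) : Xz i 0 = 1 := by
  unfold Xz; rw [Finsupp.single_zero]; exact (AddMonoidAlgebra.one_def).symm

lemma X_mul_Xinv (i : ℕ) : X i * Xinv i = 1 := by
  unfold X Xinv; rw [Xz_mul]; norm_num [Xz_zero]

lemma ab_one (l i : ℕ) : (X l * Xinv i) * (X i * Xinv l) = 1 := by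
  have h : (X l * Xinv i) * (X i * Xinv l) = (X l * Xinv l) * (X i * Xinv i) := by ring
  rw [h, X_mul_Xinv, X_mul_Xinv, one_mul]

/-- `∏_{m ∈ [s,t)} (1 - q^m b)`. -/
def Pb (b : L) (s t : ℤ) : L := ∏ m ∈ Finset.Ico s t, (1 - qC m * b)
/-- `∏_{m ∈ [s,t)} (-q^m a)`. -/
def Fm (a : L) (s t : ℤ) : L := ∏ m ∈ Finset.Ico s t, (-(qC m) * a)

lemma Pb_glue (b : L) {s t u : ℤ} (h1 : s ≤ t) (h2 : t ≤ u) :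
    Pb b s t * Pb b t u = Pb b s u := by
  unfold Pb
  rw [← Finset.prod_union (Finset.Ico_disjoint_Ico_consecutive s t u),
    Finset.Ico_union_Ico_eq_Ico h1 h2]

lemma Fm_glue (a : L) {s t u : ℤ} (h1 : s ≤ t) (h2 : t ≤ u) :
    Fm a s t * Fm a t u = Fm a s u := by
  unfold Fm
  rw [← Finset.prod_union (Finset.Ico_disjoint_Ico_consecutive s t u),
    Finset.Ico_union_Ico_eq_Ico h1 h2]

lemma qC_prod_const (z : ℤ) (s : Finset ℤ) : qC (z * s.card) = ∏ _m ∈ s, qC z := by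
  rw [Finset.prod_const]
  induction s.card with
  | zero => simpa using qC_zero
  | succ n ih => rw [pow_succ, ← ih, ← qC_add]; congr 1; push_cast; ring

lemma Fm_shift (a : L) (s t z : ℤ) (h : s ≤ t) :
    Fm a (s + z) (t + z) = qC (z * (t - s)) * Fm a s t := by
  unfold Fm
  have himg : Finset.Ico (s+z) (t+z) = (Finset.Ico s t).image (fun m => m + z) := by
    ext m; simp only [Finset.mem_Ico, Finset.mem_image]; constructor
    · intro hm; exact ⟨m - z, by omega, by omega⟩
    · rintro ⟨r, hr, rfl⟩; omega
  rw [himg, Finset.prod_image (by intro a _ b _ h; simp only at h; omega)]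
  have hfac : ∀ m ∈ Finset.Ico s t, -(qC (m + z)) * a = qC z * (-(qC m) * a) := by
    intro m _; rw [qC_add]; ring
  rw [Finset.prod_congr rfl hfac, Finset.prod_mul_distrib, ← qC_prod_const]
  congr 2
  rw [Int.card_Ico, Int.toNat_of_nonneg (by omega)]

lemma Pb_flip (a b : L) (hab : a * b = 1) (s t : ℤ) :
    Pb a s t = Fm a s t * Pb b (1 - t) (1 - s) := by
  unfold Pb Fm
  have hfac : ∀ m ∈ Finset.Ico s t, (1 - qC m * a) = (-(qC m) * a) * (1 - qC (-m) * b) := by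
    intro m _
    have h1 : (-(qC m) * a) * (1 - qC (-m) * b) = -(qC m * a) + (qC m * qC (-m)) * (a * b) := by
      ring
    rw [h1, qC_mul_qC_neg, hab]; ring
  rw [Finset.prod_congr rfl hfac, Finset.prod_mul_distrib]
  congr 1
  have himg : Finset.Ico (1-t) (1-s) = (Finset.Ico s t).image (fun m => -m) := by
    ext m; simp only [Finset.mem_Ico, Finset.mem_image]; constructor
    · intro hm; exact ⟨-m, by omega, by omega⟩
    · rintro ⟨r, hr, rfl⟩; omega
  rw [himg, Finset.prod_image (by intro a _ b _ h; simp only at h; omega)]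

/-- The master per-factor identity. -/
lemma core (a b : L) (hab : a * b = 1) (s n r : ℤ) (h0 : 0 ≤ r) (h1 : r ≤ n) :
    Pb a s (s+n) * Pb b (1-s) (1-s+n)
      = qC (n*r) * Pb a (s-n) (s-n+r) * Pb a (s+r) (s+n) * Pb b (1-s-r) (1-s-r+n) := by
  have hFsh : Fm a (s-n) (s-n+r) = qC (-(n*r)) * Fm a s (s+r) := by
    have h := Fm_shift a s (s+r) (-n) (by omega)
    rw [show s + -n = s - n by ring, show s + r + -n = s - n + r by ring,
      show -n * (s + r - s) = -(n*r) by ring] at h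
    exact h
  rw [Pb_flip a b hab s (s+n), Pb_flip a b hab (s-n) (s-n+r), Pb_flip a b hab (s+r) (s+n), hFsh]
  have gF : Fm a s (s+r) * Fm a (s+r) (s+n) = Fm a s (s+n) := Fm_glue a (by omega) (by omega)
  have gP1 : Pb b (1-(s+n)) (1-s) * Pb b (1-s) (1-s+n) = Pb b (1-(s+n)) (1-s+n) :=
    Pb_glue b (by omega) (by omega)
  have gP2 : Pb b (1-(s+n)) (1-(s+r)) * Pb b (1-s-r) (1-s-r+n) = Pb b (1-(s+n)) (1-s-r+n) := by
    rw [show 1-(s+r) = 1-s-r by ring]; exact Pb_glue b (by omega) (by omega)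
  have gP3 : Pb b (1-(s+n)) (1-s-r+n) * Pb b (1-(s-n+r)) (1-(s-n)) = Pb b (1-(s+n)) (1-s+n) := by
    rw [show 1-(s-n+r) = 1-s-r+n by ring, show 1-(s-n) = 1-s+n by ring]
    exact Pb_glue b (by omega) (by omega)
  have hq : qC (n*r) * qC (-(n*r)) = 1 := qC_mul_qC_neg (n*r)
  calc Fm a s (s+n) * Pb b (1-(s+n)) (1-s) * Pb b (1-s) (1-s+n)
      = Fm a s (s+n) * (Pb b (1-(s+n)) (1-s) * Pb b (1-s) (1-s+n)) := by ring
    _ = Fm a s (s+n) * Pb b (1-(s+n)) (1-s+n) := by rw [gP1]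
    _ = (qC (n*r) * qC (-(n*r))) * ((Fm a s (s+r) * Fm a (s+r) (s+n)) *
          (Pb b (1-(s+n)) (1-s-r+n) * Pb b (1-(s-n+r)) (1-(s-n)))) := by
        rw [hq, gF, gP3]; ring
    _ = (qC (n*r) * qC (-(n*r))) * ((Fm a s (s+r) * Fm a (s+r) (s+n)) *
          ((Pb b (1-(s+n)) (1-(s+r)) * Pb b (1-s-r) (1-s-r+n)) * Pb b (1-(s-n+r)) (1-(s-n)))) := by
        rw [gP2]
    _ = qC (n*r) * (qC (-(n*r)) * Fm a s (s+r) * Pb b (1-(s-n+r)) (1-(s-n))) *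
          (Fm a (s+r) (s+n) * Pb b (1-(s+n)) (1-(s+r))) * Pb b (1-s-r) (1-s-r+n) := by ring

lemma poch_eq_Pb (m : L) (s : ℤ) (n : ℕ) : poch (qC s * m) n = Pb m s (s + n) := by
  unfold poch Pb
  have himg : Finset.Ico s (s + (n:ℤ)) = (Finset.range n).image (fun r : ℕ => s + (r:ℤ)) := by
    ext x; simp only [Finset.mem_Ico, Finset.mem_image, Finset.mem_range]; constructor
    · intro hx; exact ⟨(x - s).toNat, by omega, by omega⟩
    · rintro ⟨r, hr, rfl⟩; omega
  rw [himg, Finset.prod_image (by intro a _ b _ h; simp only at h; omega)]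
  apply Finset.prod_congr rfl
  intro r _
  rw [qC_add]; ring

lemma poch_eq_Pb0 (m : L) (n : ℕ) : poch m n = Pb m 0 n := by
  have := poch_eq_Pb m 0 n
  rwa [qC_zero, one_mul, zero_add] at this

lemma block1 (a b : L) (hab : a * b = 1) (c J : ℕ) (j : ℤ) (hj : (J:ℤ) = j + 1) (hJc : J ≤ c) :
    poch a c * poch (qC 1 * b) c
      = (qC ((c:ℤ)*(j+1)) * poch (qC (-(c:ℤ)) * a) J * poch (qC (j+1) * a) (c-J))
          * poch (qC (-j) * b) c := by
  have h := core a b hab 0 c (j+1) (by omega) (by omega)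
  rw [poch_eq_Pb0]
  simp only [poch_eq_Pb]
  push_cast [Nat.cast_sub hJc] at h ⊢
  rw [hj]
  ring_nf at h ⊢
  linear_combination h

lemma block2 (a b : L) (hab : a * b = 1) (c J : ℕ) (j : ℤ) (hj : (J:ℤ) = j + 1) (hJc : J ≤ c) :
    poch a (c+1) * poch (qC 1 * b) (c+1)
      = (qC (((c:ℤ)+1)*(j+2)) * poch (qC (-(c:ℤ)-1) * a) (J+1) * poch (qC (j+2) * a) (c-J))
          * poch (qC (-j-1) * b) (c+1) := by
  have h := core a b hab 0 (↑c+1) (j+2) (by omega) (by omega)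
  rw [poch_eq_Pb0]
  simp only [poch_eq_Pb]
  push_cast [Nat.cast_sub hJc] at h ⊢
  rw [hj]
  ring_nf at h ⊢
  linear_combination h

lemma block3 (a b : L) (hab : a * b = 1) (c J : ℕ) (j : ℤ) (hj : (J:ℤ) = j + 1) (hJc : J ≤ c) :
    poch b (c+1) * poch (qC 1 * a) (c+1)
      = (qC (((c:ℤ)+1)*(j+1)) * poch (qC (-(c:ℤ)) * a) J * poch (qC (j+2) * a) (c+1-J))
          * poch (qC (-j-1) * b) (c+1) := by
  have h := core a b hab 1 (↑c+1) (j+1) (by omega) (by omega)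
  rw [poch_eq_Pb0]
  simp only [poch_eq_Pb]
  have hc1 : c + 1 - J = (c - J) + 1 := by omega
  push_cast [Nat.cast_sub hJc, hc1] at h ⊢
  rw [hj]
  ring_nf at h ⊢
  linear_combination h

lemma block4 (a b : L) (hab : a * b = 1) (c J : ℕ) (j : ℤ) (hj : (J:ℤ) = j + 1) (hJc : J ≤ c) :
    poch b c * poch (qC 1 * a) c
      = (qC ((c:ℤ)*(j+1)) * poch (qC (1-(c:ℤ)) * a) J * poch (qC (j+2) * a) (c-J))
          * poch (qC (-j-1) * b) c := by
  have h := core a b hab 1 c (j+1) (by omega) (by omega)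
  rw [poch_eq_Pb0]
  simp only [poch_eq_Pb]
  push_cast [Nat.cast_sub hJc] at h ⊢
  rw [hj]
  ring_nf at h ⊢
  linear_combination h

/-! ### the substitution homomorphism -/

/-- the exponent map of `substY`. -/
def phiE (i : ℕ) (v : ℕ →₀ ℤ) : ℕ →₀ ℤ := v + Finsupp.single i (v 0) - Finsupp.single 0 (v 0)

lemma phiE_add (i : ℕ) (v w : ℕ →₀ ℤ) : phiE i (v + w) = phiE i v + phiE i w := by
  unfold phiE
  rw [Finsupp.add_apply, Finsupp.single_add, Finsupp.single_add]
  abel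

lemma phiE_zero (i : ℕ) : phiE i 0 = 0 := by
  unfold phiE; simp

/-- the substitution monoid hom on monomials. -/
def psiE (i : ℕ) (e : F) (he : e ≠ 0) : Multiplicative (ℕ →₀ ℤ) →* L where
  toFun v := AddMonoidAlgebra.single (phiE i (Multiplicative.toAdd v)) (e ^ (Multiplicative.toAdd v 0))
  map_one' := by
    simp only [toAdd_one, phiE_zero, Finsupp.coe_zero, Pi.zero_apply, zpow_zero]
    exact (AddMonoidAlgebra.one_def).symm
  map_mul' := by
    intro v w
    simp only [toAdd_mul]
    rw [AddMonoidAlgebra.single_mul_single, phiE_add, Finsupp.add_apply, zpow_add₀ he]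

/-- `substY` as an algebra homomorphism. -/
def substHom (i : ℕ) (e : F) (he : e ≠ 0) : L →ₐ[F] L :=
  AddMonoidAlgebra.lift F L (ℕ →₀ ℤ) (psiE i e he)

lemma substY_eq (i : ℕ) (e : F) (he : e ≠ 0) (f : L) :
    substY i e f = substHom i e he f := by
  unfold substHom substY
  rw [AddMonoidAlgebra.lift_apply]
  apply Finset.sum_congr rfl
  intro v _
  show AddMonoidAlgebra.single _ (f.coeff v * e ^ v 0) = f.coeff v • AddMonoidAlgebra.single (phiE i v) (e ^ v 0)
  rw [AddMonoidAlgebra.smul_single']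
  rfl

lemma substHom_Xz (i : ℕ) (e : F) (he : e ≠ 0) (l : ℕ) (hl : l ≠ 0) (z : ℤ) :
    substHom i e he (Xz l z) = Xz l z := by
  rw [← substY_eq i e he]
  unfold substY Xz
  rw [AddMonoidAlgebra.coeff_single, Finsupp.sum_single_index (by simp)]
  have h0 : (Finsupp.single l z) 0 = 0 := Finsupp.single_eq_of_ne' hl
  rw [h0]
  simp

lemma substHom_X0 (i : ℕ) (e : F) (he : e ≠ 0) :
    substHom i e he (X 0) = algebraMap F L e * X i := by
  rw [← substY_eq i e he]
  unfold substY X Xz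
  rw [AddMonoidAlgebra.coeff_single, Finsupp.sum_single_index (by simp)]
  have h0 : (Finsupp.single 0 (1:ℤ)) 0 = 1 := Finsupp.single_eq_same
  rw [h0]
  have h1 : Finsupp.single 0 (1:ℤ) + Finsupp.single i 1 - Finsupp.single 0 1
      = Finsupp.single i 1 := by abel
  rw [h1, zpow_one, one_mul]
  have h2 : algebraMap F L e = AddMonoidAlgebra.single 0 e := rfl
  rw [h2, AddMonoidAlgebra.single_mul_single, zero_add, mul_one]

lemma substHom_qC (i : ℕ) (e : F) (he : e ≠ 0) (z : ℤ) :
    substHom i e he (qC z) = qC z := by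
  unfold qC
  exact AlgHom.commutes _ _

lemma substHom_poch (i : ℕ) (e : F) (he : e ≠ 0) (t : L) (n : ℕ) :
    substHom i e he (poch t n) = poch (substHom i e he t) n := by
  unfold poch
  rw [map_prod]
  apply Finset.prod_congr rfl
  intro m _
  rw [map_sub, map_one, map_mul, substHom_qC]

/-! ### finset splittings, epsilon, nonvanishing -/

section splits
variable {M : Type*} [CommMonoid M]

lemma prod_Icc_split (f : ℕ → M) (a m b : ℕ) (h1 : a ≤ m + 1) (h2 : m ≤ b) :
    ∏ l ∈ Finset.Icc a b, f l = (∏ l ∈ Finset.Icc a m, f l) * ∏ l ∈ Finset.Icc (m+1) b, f l := by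
  rw [← Finset.prod_union (by simp only [Finset.disjoint_left, Finset.mem_Icc]; omega)]
  congr 1
  ext x; simp only [Finset.mem_union, Finset.mem_Icc]; omega

lemma prod_Icc_erase (f : ℕ → M) (a b i : ℕ) (h0 : 1 ≤ i) (h1 : a ≤ i) (h2 : i ≤ b) :
    ∏ l ∈ (Finset.Icc a b).erase i, f l
      = (∏ l ∈ Finset.Icc a (i-1), f l) * ∏ l ∈ Finset.Icc (i+1) b, f l := by
  have hd : Disjoint (Finset.Icc a (i-1)) (Finset.Icc (i+1) b) := by
    rw [Finset.disjoint_left]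
    intro x hx hy
    simp only [Finset.mem_Icc] at hx hy
    omega
  rw [← Finset.prod_union hd]
  congr 1
  ext x; simp only [Finset.mem_union, Finset.mem_Icc, Finset.mem_erase]; omega

lemma prod_range_erase (f : ℕ → M) (c J : ℕ) (hJ : J ≤ c) :
    ∏ m ∈ (Finset.range (c+1)).erase J, f m
      = (∏ m ∈ Finset.range J, f m) * ∏ m ∈ Finset.Icc (J+1) c, f m := by
  rw [← Finset.prod_union (by simp only [Finset.disjoint_left, Finset.mem_range, Finset.mem_Icc]; omega)]
  congr 1
  ext x; simp only [Finset.mem_union, Finset.mem_range, Finset.mem_Icc, Finset.mem_erase]; omega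

lemma pairs_split (n i : ℕ) (h1 : 1 ≤ i) (h2 : i ≤ n) (f : ℕ × ℕ → M) :
    ∏ uv ∈ pairs n, f uv =
      (∏ l ∈ Finset.Icc 1 (i-1), f (l, i)) *
        ((∏ l ∈ Finset.Icc (i+1) n, f (i, l)) *
          ∏ uv ∈ (pairs n).filter (fun uv => uv.1 ≠ i ∧ uv.2 ≠ i), f uv) := by
  rw [← Finset.prod_filter_mul_prod_filter_not (pairs n) (fun uv => uv.2 = i) f]
  rw [← Finset.prod_filter_mul_prod_filter_not
    ((pairs n).filter (fun uv => ¬ uv.2 = i)) (fun uv => uv.1 = i) f]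
  have hC : (pairs n).filter (fun uv => uv.2 = i) = (Finset.Icc 1 (i-1)).image (fun l => (l, i)) := by
    ext ⟨u,v⟩
    simp only [pairs, Finset.mem_filter, Finset.mem_product, Finset.mem_Icc, Finset.mem_image,
      Prod.mk.injEq]
    constructor
    · rintro ⟨⟨⟨hu1,hu2⟩,_⟩,h3⟩
      exact ⟨u, by omega, rfl, by omega⟩
    · rintro ⟨l, hl, rfl, rfl⟩; omega
  have hA : ((pairs n).filter (fun uv => ¬ uv.2 = i)).filter (fun uv => uv.1 = i)
      = (Finset.Icc (i+1) n).image (fun l => (i, l)) := by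
    ext ⟨u,v⟩
    simp only [pairs, Finset.mem_filter, Finset.mem_product, Finset.mem_Icc, Finset.mem_image,
      Prod.mk.injEq]
    constructor
    · rintro ⟨⟨⟨⟨hu1,hu2⟩,_⟩,h3⟩,h4⟩
      exact ⟨v, by omega, by omega, rfl⟩
    · rintro ⟨l, hl, rfl, rfl⟩; omega
  have hB : ((pairs n).filter (fun uv => ¬ uv.2 = i)).filter (fun uv => ¬ uv.1 = i)
      = (pairs n).filter (fun uv => uv.1 ≠ i ∧ uv.2 ≠ i) := by
    ext ⟨u,v⟩
    simp only [pairs, Finset.mem_filter, Finset.mem_product, Finset.mem_Icc]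
    tauto
  rw [hC, hA, hB,
    Finset.prod_image (by intro a _ b _ h; exact (Prod.mk.injEq .. ▸ congrArg id h : _ ∧ _).1),
    Finset.prod_image (by intro a _ b _ h; exact (Prod.mk.injEq .. ▸ congrArg id h : _ ∧ _).2)]
end splits

lemma sigma_mono (nn : ℕ → ℕ) {a b : ℕ} (h : a ≤ b) : sigmaSum nn a ≤ sigmaSum nn b := by
  unfold sigmaSum
  exact Finset.sum_le_sum_of_subset (Finset.range_subset_range.2 (by omega))

lemma block_unique (p : ℕ) (nn : ℕ → ℕ) (k : ℕ) (hk1 : 1 ≤ k) (hkp : k ≤ p)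
    (i : ℕ) (hi1 : sigmaSum nn (k-1) < i) (hi2 : i ≤ sigmaSum nn k)
    (m : ℕ) (hm1 : 1 ≤ m) (hmp : m ≤ p)
    (h : sigmaSum nn (m-1) < i ∧ i ≤ sigmaSum nn m) : m = k := by
  rcases lt_trichotomy m k with hlt | heq | hgt
  · have := sigma_mono nn (show m ≤ k - 1 by omega)
    omega
  · exact heq
  · have := sigma_mono nn (show k ≤ m - 1 by omega)
    omega

lemma eps_left (p : ℕ) (nn : ℕ → ℕ) (k : ℕ) (hk1 : 1 ≤ k) (hkp : k ≤ p)
    (i : ℕ) (hi1 : sigmaSum nn (k-1) < i) (hi2 : i ≤ sigmaSum nn k) (l : ℕ) :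
    eps p nn l i = if sigmaSum nn (k-1) < l ∧ l ≤ sigmaSum nn k then 1 else 0 := by
  unfold eps
  by_cases h : sigmaSum nn (k-1) < l ∧ l ≤ sigmaSum nn k
  · rw [if_pos h, if_pos ⟨k, hk1, hkp, by simp only [Finset.mem_Ioc]; omega,
      by simp only [Finset.mem_Ioc]; omega⟩]
  · rw [if_neg h, if_neg]
    rintro ⟨m, hm1, hmp, hlm, him⟩
    simp only [Finset.mem_Ioc] at hlm him
    have := block_unique p nn k hk1 hkp i hi1 hi2 m hm1 hmp him
    subst this
    exact h hlm

lemma eps_right (p : ℕ) (nn : ℕ → ℕ) (k : ℕ) (hk1 : 1 ≤ k) (hkp : k ≤ p)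
    (i : ℕ) (hi1 : sigmaSum nn (k-1) < i) (hi2 : i ≤ sigmaSum nn k) (l : ℕ) :
    eps p nn i l = if sigmaSum nn (k-1) < l ∧ l ≤ sigmaSum nn k then 1 else 0 := by
  unfold eps
  by_cases h : sigmaSum nn (k-1) < l ∧ l ≤ sigmaSum nn k
  · rw [if_pos h, if_pos ⟨k, hk1, hkp, by simp only [Finset.mem_Ioc]; omega,
      by simp only [Finset.mem_Ioc]; omega⟩]
  · rw [if_neg h, if_neg]
    rintro ⟨m, hm1, hmp, him, hlm⟩
    simp only [Finset.mem_Ioc] at hlm him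
    have := block_unique p nn k hk1 hkp i hi1 hi2 m hm1 hmp him
    subst this
    exact h hlm

lemma scalar_eval (c J : ℕ) (j : ℤ) (hj : (J:ℤ) = j + 1) (hJc : J ≤ c) :
    ∏ m ∈ (Finset.range (c+1)).erase J, ((1:L) - qC ((m:ℤ) - 1 - j))
      = algebraMap F L (qPochF (qq ^ (-j-1)) J * qPochF qq (c-J)) := by
  rw [prod_range_erase _ c J hJc, map_mul]
  congr 1
  · unfold qPochF
    rw [map_prod]
    refine Finset.prod_congr rfl fun m _ => ?_
    rw [map_sub, map_one, map_mul]
    have h2 : algebraMap F L (qq ^ (-j-1)) * algebraMap F L (qq ^ m) = qC ((m:ℤ)-1-j) := by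
      unfold qC
      rw [← map_mul, ← zpow_natCast qq m, ← zpow_add₀ qq_ne_zero]
      congr 2
      ring
    rw [h2]
  · unfold qPochF
    rw [map_prod]
    have himg : Finset.Icc (J+1) c = (Finset.range (c-J)).image (fun r => J+1+r) := by
      ext x; simp only [Finset.mem_Icc, Finset.mem_image, Finset.mem_range]
      constructor
      · intro hx; exact ⟨x - (J+1), by omega, by omega⟩
      · rintro ⟨r, hr, rfl⟩; omega
    rw [himg, Finset.prod_image (by intro a _ b _ h; simp only at h; omega)]
    refine Finset.prod_congr rfl fun r _ => ?_
    rw [map_sub, map_one, map_mul]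
    have h2 : algebraMap F L qq * algebraMap F L (qq ^ r) = qC (((J+1+r : ℕ) : ℤ) - 1 - j) := by
      unfold qC
      rw [← map_mul, ← zpow_natCast qq r]
      congr 1
      rw [show ((J+1+r:ℕ):ℤ) - 1 - j = 1 + (r:ℤ) by push_cast; omega,
        zpow_add₀ qq_ne_zero, zpow_one]
    rw [h2]

lemma qPochF_zpow_ne_zero (z : ℤ) (n : ℕ) (h : ∀ m : ℕ, m < n → z + m ≠ 0) :
    qPochF (qq ^ z) n ≠ 0 := by
  unfold qPochF
  rw [Finset.prod_ne_zero_iff]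
  intro m hm
  have h2 : qq ^ z * qq ^ m = qq ^ (z + m) := by
    rw [← zpow_natCast qq m, ← zpow_add₀ qq_ne_zero]
  rw [h2]
  exact one_sub_qq_zpow_ne_zero _ (h m (Finset.mem_range.1 hm))

lemma qPochF_qq_ne_zero (n : ℕ) : qPochF qq n ≠ 0 := by
  have h : (qq : F) = qq ^ (1:ℤ) := (zpow_one qq).symm
  rw [h]; exact qPochF_zpow_ne_zero 1 n (by intro m _; omega)

lemma one_sub_ne (i l : ℕ) (h : i ≠ l) (m : ℤ) : (1:L) - qC m * (X i * Xinv l) ≠ 0 := by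
  have hXX : X i * Xinv l
      = AddMonoidAlgebra.single (Finsupp.single i 1 + Finsupp.single l (-1)) 1 := by
    unfold X Xinv Xz; rw [AddMonoidAlgebra.single_mul_single, mul_one]
  have hv : Finsupp.single i (1:ℤ) + Finsupp.single l (-1) ≠ 0 := by
    intro h0
    have h1 := DFunLike.congr_fun h0 i
    rw [Finsupp.add_apply, Finsupp.single_eq_same, Finsupp.single_eq_of_ne' (Ne.symm h)] at h1
    simp at h1
  intro h0
  rw [sub_eq_zero] at h0
  have h1 : qC m * (X i * Xinv l)
      = AddMonoidAlgebra.single (Finsupp.single i 1 + Finsupp.single l (-1)) (qq ^ m) := by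
    rw [hXX, show qC m = AddMonoidAlgebra.single (0 : ℕ →₀ ℤ) (qq ^ m) from rfl,
      AddMonoidAlgebra.single_mul_single, zero_add, mul_one]
  rw [h1] at h0
  have h2 : (1:L).coeff 0 = (AddMonoidAlgebra.single (Finsupp.single i 1 + Finsupp.single l (-1)) (qq ^ m) : L).coeff 0 := by
    rw [← h0]
  rw [AddMonoidAlgebra.coeff_single, Finsupp.single_eq_of_ne' hv] at h2
  have h3 : (1:L).coeff 0 = 1 := by rw [AddMonoidAlgebra.one_def]; exact Finsupp.single_eq_same
  rw [h3] at h2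
  exact one_ne_zero h2

lemma Pb_X_ne_zero (i l : ℕ) (h : i ≠ l) (s t : ℤ) : Pb (X i * Xinv l) s t ≠ 0 := by
  unfold Pb
  rw [Finset.prod_ne_zero_iff]
  intro m _
  exact one_sub_ne i l h m

lemma cancel_left (x y A B C D E : L) (h : x * y = 1) :
    (x * A * B * C * D * E) * y = A * B * C * D * E := by
  calc (x * A * B * C * D * E) * y = (x * y) * (A * B * C * D * E) := by ring
    _ = A * B * C * D * E := by rw [h, one_mul]

/-- **The partial-fraction coefficient `A^{(k)}_{ij}`** (part of Lemma 3.1 / lem-split):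
for `i ∈ N_k` and `-1 ≤ j ≤ c - 1`, the rational function `S · (1 - q^j y/x_i)` has no
pole along `y = q^{-j} x_i` (the remaining denominator does not vanish there), and its
value at `y = q^{-j} x_i` equals `A^{(k)}_{ij}`: after the substitution
`y ↦ q^{-j} x_i`, numerator `= A^{(k)}_{ij} ·` (remaining denominator). -/
theorem splitting_Akij
    (p : ℕ) (hp : 1 ≤ p) (nn : ℕ → ℕ) (hpos : ∀ i ≤ p, 1 ≤ nn i) (c : ℕ)
    (k : ℕ) (hk1 : 1 ≤ k) (hkp : k ≤ p)
    (hmax : ∀ i, 1 ≤ i → i ≤ p → nn i ≤ nn k)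
    (i : ℕ) (hi1 : sigmaSum nn (k - 1) < i) (hi2 : i ≤ sigmaSum nn k)
    (j : ℤ) (hj1 : -1 ≤ j) (hj2 : j ≤ (c : ℤ) - 1) :
    substY i (qq ^ (-j)) (denomS' p nn c k i j) ≠ 0 ∧
      substY i (qq ^ (-j)) (BF p nn c) =
        Akij p nn c k i j * substY i (qq ^ (-j)) (denomS' p nn c k i j) := by
  have he : (qq ^ (-j) : F) ≠ 0 := zpow_ne_zero _ qq_ne_zero
  set J : ℕ := (j + 1).toNat with hJdef
  have hj : (J:ℤ) = j + 1 := Int.toNat_of_nonneg (by omega)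
  have hJc : J ≤ c := by omega
  have hs01 : sigmaSum nn (k-1) ≤ sigmaSum nn k := sigma_mono nn (by omega)
  have hskp : sigmaSum nn k ≤ sigmaSum nn p := sigma_mono nn hkp
  have hs1 : 1 ≤ sigmaSum nn (k-1) := by
    have h0 := hpos 0 (by omega)
    have h1 : nn 0 ≤ sigmaSum nn (k-1) :=
      Finset.single_le_sum (f := nn) (fun _ _ => Nat.zero_le _) (Finset.mem_range.2 (by omega))
    omega
  have hi0 : i ≠ 0 := by omega
  have hin : i ≤ sigmaSum nn p := by omega
  have hSX : ∀ l : ℕ, l ≠ 0 → substHom i (qq ^ (-j)) he (X l) = X l :=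
    fun l hl => substHom_Xz i (qq ^ (-j)) he l hl 1
  have hSXi : ∀ l : ℕ, l ≠ 0 → substHom i (qq ^ (-j)) he (Xinv l) = Xinv l :=
    fun l hl => substHom_Xz i (qq ^ (-j)) he l hl (-1)
  -- the numerator is unchanged by the substitution
  have hSBF : substHom i (qq ^ (-j)) he (BF p nn c) = BF p nn c := by
    unfold BF
    rw [map_prod]
    refine Finset.prod_congr rfl fun uv huv => ?_
    have huv' : 1 ≤ uv.1 ∧ 1 ≤ uv.2 := by
      simp only [pairs, Finset.mem_filter, Finset.mem_product, Finset.mem_Icc] at huv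
      exact ⟨huv.1.1.1, huv.1.2.1⟩
    rw [map_mul, substHom_poch, substHom_poch, map_mul,
      hSX uv.1 (by omega), hSXi uv.2 (by omega),
      map_mul, map_mul, substHom_qC, hSX uv.2 (by omega), hSXi uv.1 (by omega)]
  -- the denominator pieces
  have hA : substHom i (qq ^ (-j)) he
        (∏ l ∈ Finset.Icc 1 (sigmaSum nn (k-1)), poch (X 0 * Xinv l) c)
      = ∏ l ∈ Finset.Icc 1 (sigmaSum nn (k-1)), poch (qC (-j) * (X i * Xinv l)) c := by
    rw [map_prod]
    refine Finset.prod_congr rfl fun l hl => ?_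
    simp only [Finset.mem_Icc] at hl
    rw [substHom_poch, map_mul, substHom_X0 i _ he, hSXi l (by omega)]
    congr 1
    rw [show algebraMap F L (qq ^ (-j)) = qC (-j) from rfl, mul_assoc]
  have hfacB : ∀ (l : ℕ), l ≠ 0 → ∀ d : ℕ,
      substHom i (qq ^ (-j)) he (poch (qC (-1) * X 0 * Xinv l) d)
        = poch (qC (-j-1) * (X i * Xinv l)) d := by
    intro l hl d
    rw [substHom_poch, map_mul, map_mul, substHom_qC, substHom_X0 i _ he, hSXi l hl]
    congr 1
    rw [show algebraMap F L (qq ^ (-j)) = qC (-j) from rfl]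
    calc qC (-1) * (qC (-j) * X i) * Xinv l = (qC (-1) * qC (-j)) * (X i * Xinv l) := by ring
      _ = qC (-j-1) * (X i * Xinv l) := by rw [← qC_add, show (-1 + -j : ℤ) = -j-1 by ring]
  have hB : substHom i (qq ^ (-j)) he
        (∏ l ∈ (Finset.Icc (sigmaSum nn (k-1) + 1) (sigmaSum nn k)).erase i,
          poch (qC (-1) * X 0 * Xinv l) (c+1))
      = (∏ l ∈ Finset.Icc (sigmaSum nn (k-1) + 1) (i-1),
          poch (qC (-j-1) * (X i * Xinv l)) (c+1)) *
        ∏ l ∈ Finset.Icc (i+1) (sigmaSum nn k), poch (qC (-j-1) * (X i * Xinv l)) (c+1) := by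
    rw [map_prod]
    rw [Finset.prod_congr rfl (fun l hl => hfacB l (by
      simp only [Finset.mem_erase, Finset.mem_Icc] at hl; omega) (c+1))]
    exact prod_Icc_erase _ _ _ _ (by omega) (by omega) (by omega)
  have hD : substHom i (qq ^ (-j)) he
        (∏ l ∈ Finset.Icc (sigmaSum nn k + 1) (sigmaSum nn p), poch (qC (-1) * X 0 * Xinv l) c)
      = ∏ l ∈ Finset.Icc (sigmaSum nn k + 1) (sigmaSum nn p),
          poch (qC (-j-1) * (X i * Xinv l)) c := by
    rw [map_prod]
    exact Finset.prod_congr rfl fun l hl => hfacB l (by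
      simp only [Finset.mem_Icc] at hl; omega) c
  have hC : substHom i (qq ^ (-j)) he
        (∏ m ∈ (Finset.range (c + 1)).erase (j + 1).toNat,
          (1 - qC ((m : ℤ) - 1) * X 0 * Xinv i))
      = algebraMap F L (qPochF (qq ^ (-j-1)) J * qPochF qq (c-J)) := by
    rw [map_prod, ← hJdef]
    have hfc : ∀ m : ℕ, substHom i (qq ^ (-j)) he (1 - qC ((m:ℤ)-1) * X 0 * Xinv i)
        = 1 - qC ((m:ℤ)-1-j) := by
      intro m
      rw [map_sub, map_one, map_mul, map_mul, substHom_qC, substHom_X0 i _ he, hSXi i hi0]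
      congr 1
      rw [show algebraMap F L (qq ^ (-j)) = qC (-j) from rfl]
      calc qC ((m:ℤ)-1) * (qC (-j) * X i) * Xinv i
          = (qC ((m:ℤ)-1) * qC (-j)) * (X i * Xinv i) := by ring
        _ = qC ((m:ℤ)-1-j) := by
            rw [X_mul_Xinv, mul_one, ← qC_add, show ((m:ℤ)-1 + -j) = (m:ℤ)-1-j by ring]
    rw [Finset.prod_congr rfl (fun m _ => hfc m)]
    exact scalar_eval c J j hj hJc
  have hSDen : substHom i (qq ^ (-j)) he (denomS' p nn c k i j)
      = algebraMap F L (qPochF (qq ^ (-j-1)) J * qPochF qq (c-J)) *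
        (((∏ l ∈ Finset.Icc 1 (sigmaSum nn (k-1)), poch (qC (-j) * (X i * Xinv l)) c) *
          ((∏ l ∈ Finset.Icc (sigmaSum nn (k-1) + 1) (i-1),
              poch (qC (-j-1) * (X i * Xinv l)) (c+1)) *
           ∏ l ∈ Finset.Icc (i+1) (sigmaSum nn k),
              poch (qC (-j-1) * (X i * Xinv l)) (c+1))) *
         ∏ l ∈ Finset.Icc (sigmaSum nn k + 1) (sigmaSum nn p),
            poch (qC (-j-1) * (X i * Xinv l)) c) := by
    unfold denomS'
    rw [map_mul, map_mul, map_mul, hA, hB, hC, hD]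
    ring
  have hVne : (qPochF (qq ^ (-j-1)) J * qPochF qq (c-J)) ≠ 0 := by
    refine mul_ne_zero ?_ (qPochF_qq_ne_zero _)
    rw [show (-j-1:ℤ) = -(J:ℤ) by omega]
    exact qPochF_zpow_ne_zero _ _ (fun m hm => by omega)
  constructor
  · -- nonvanishing of the substituted denominator
    rw [substY_eq i _ he, hSDen]
    refine mul_ne_zero ?_ (mul_ne_zero (mul_ne_zero ?_ (mul_ne_zero ?_ ?_)) ?_)
    · exact fun h0 => hVne ((algebraMap F L).injective (by rw [h0, map_zero]))
    · refine Finset.prod_ne_zero_iff.mpr fun l hl => ?_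
      simp only [Finset.mem_Icc] at hl
      rw [poch_eq_Pb]
      exact Pb_X_ne_zero i l (by omega) _ _
    · refine Finset.prod_ne_zero_iff.mpr fun l hl => ?_
      simp only [Finset.mem_Icc] at hl
      rw [poch_eq_Pb]
      exact Pb_X_ne_zero i l (by omega) _ _
    · refine Finset.prod_ne_zero_iff.mpr fun l hl => ?_
      simp only [Finset.mem_Icc] at hl
      rw [poch_eq_Pb]
      exact Pb_X_ne_zero i l (by omega) _ _
    · refine Finset.prod_ne_zero_iff.mpr fun l hl => ?_
      simp only [Finset.mem_Icc] at hl
      rw [poch_eq_Pb]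
      exact Pb_X_ne_zero i l (by omega) _ _
  · -- the main identity
    rw [substY_eq i _ he, substY_eq i _ he, hSBF, hSDen, ← mul_assoc]
    unfold Akij
    simp only [← hJdef, show ((c:ℤ)-j-1).toNat = c - J from by omega,
      show (j+2).toNat = J+1 from by omega, show ((c:ℤ)-j).toNat = c+1-J from by omega]
    rw [cancel_left (algebraMap F L ((qPochF (qq ^ (-j-1)) J * qPochF qq (c-J))⁻¹))
      (algebraMap F L (qPochF (qq ^ (-j-1)) J * qPochF qq (c-J))) _ _ _ _ _ (by
      rw [← map_mul, inv_mul_cancel₀ hVne, map_one])]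
    unfold BF BFavoid
    rw [pairs_split (sigmaSum nn p) i (by omega) hin]
    rw [prod_Icc_split _ 1 (sigmaSum nn (k-1)) (i-1) (by omega) (by omega)]
    rw [prod_Icc_split _ (i+1) (sigmaSum nn k) (sigmaSum nn p) (by omega) (by omega)]
    have hQ1 : (∏ l ∈ Finset.Icc 1 (sigmaSum nn (k-1)),
          (poch (X l * Xinv i) (c + eps p nn l i) *
            poch (qC 1 * X i * Xinv l) (c + eps p nn l i)))
        = (∏ l ∈ Finset.Icc 1 (sigmaSum nn (k-1)),
            qC ((c:ℤ) * (j+1)) * poch (qC (-(c:ℤ)) * X l * Xinv i) J *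
              poch (qC (j+1) * X l * Xinv i) (c-J)) *
          ∏ l ∈ Finset.Icc 1 (sigmaSum nn (k-1)), poch (qC (-j) * (X i * Xinv l)) c := by
      rw [← Finset.prod_mul_distrib]
      refine Finset.prod_congr rfl fun l hl => ?_
      simp only [Finset.mem_Icc] at hl
      rw [eps_left p nn k hk1 hkp i hi1 hi2 l,
        if_neg (by omega : ¬(sigmaSum nn (k-1) < l ∧ l ≤ sigmaSum nn k)), Nat.add_zero]
      have hb := block1 (X l * Xinv i) (X i * Xinv l) (ab_one l i) c J j hj hJc
      simp only [mul_assoc] at hb ⊢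
      exact hb
    have hQ2 : (∏ l ∈ Finset.Icc (sigmaSum nn (k-1) + 1) (i-1),
          (poch (X l * Xinv i) (c + eps p nn l i) *
            poch (qC 1 * X i * Xinv l) (c + eps p nn l i)))
        = (∏ l ∈ Finset.Icc (sigmaSum nn (k-1) + 1) (i-1),
            qC (((c:ℤ)+1) * (j+2)) * poch (qC (-(c:ℤ)-1) * X l * Xinv i) (J+1) *
              poch (qC (j+2) * X l * Xinv i) (c-J)) *
          ∏ l ∈ Finset.Icc (sigmaSum nn (k-1) + 1) (i-1),
            poch (qC (-j-1) * (X i * Xinv l)) (c+1) := by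
      rw [← Finset.prod_mul_distrib]
      refine Finset.prod_congr rfl fun l hl => ?_
      simp only [Finset.mem_Icc] at hl
      rw [eps_left p nn k hk1 hkp i hi1 hi2 l,
        if_pos (by omega : sigmaSum nn (k-1) < l ∧ l ≤ sigmaSum nn k)]
      have hb := block2 (X l * Xinv i) (X i * Xinv l) (ab_one l i) c J j hj hJc
      simp only [mul_assoc] at hb ⊢
      exact hb
    have hQ3 : (∏ l ∈ Finset.Icc (i+1) (sigmaSum nn k),
          (poch (X i * Xinv l) (c + eps p nn i l) *
            poch (qC 1 * X l * Xinv i) (c + eps p nn i l)))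
        = (∏ l ∈ Finset.Icc (i+1) (sigmaSum nn k),
            qC (((c:ℤ)+1) * (j+1)) * poch (qC (-(c:ℤ)) * X l * Xinv i) J *
              poch (qC (j+2) * X l * Xinv i) (c+1-J)) *
          ∏ l ∈ Finset.Icc (i+1) (sigmaSum nn k),
            poch (qC (-j-1) * (X i * Xinv l)) (c+1) := by
      rw [← Finset.prod_mul_distrib]
      refine Finset.prod_congr rfl fun l hl => ?_
      simp only [Finset.mem_Icc] at hl
      rw [eps_right p nn k hk1 hkp i hi1 hi2 l,
        if_pos (by omega : sigmaSum nn (k-1) < l ∧ l ≤ sigmaSum nn k)]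
      have hb := block3 (X l * Xinv i) (X i * Xinv l) (ab_one l i) c J j hj hJc
      simp only [mul_assoc] at hb ⊢
      exact hb
    have hQ4 : (∏ l ∈ Finset.Icc (sigmaSum nn k + 1) (sigmaSum nn p),
          (poch (X i * Xinv l) (c + eps p nn i l) *
            poch (qC 1 * X l * Xinv i) (c + eps p nn i l)))
        = (∏ l ∈ Finset.Icc (sigmaSum nn k + 1) (sigmaSum nn p),
            qC ((c:ℤ) * (j+1)) * poch (qC (1-(c:ℤ)) * X l * Xinv i) J *
              poch (qC (j+2) * X l * Xinv i) (c-J)) *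
          ∏ l ∈ Finset.Icc (sigmaSum nn k + 1) (sigmaSum nn p),
            poch (qC (-j-1) * (X i * Xinv l)) c := by
      rw [← Finset.prod_mul_distrib]
      refine Finset.prod_congr rfl fun l hl => ?_
      simp only [Finset.mem_Icc] at hl
      rw [eps_right p nn k hk1 hkp i hi1 hi2 l,
        if_neg (by omega : ¬(sigmaSum nn (k-1) < l ∧ l ≤ sigmaSum nn k)), Nat.add_zero]
      have hb := block4 (X l * Xinv i) (X i * Xinv l) (ab_one l i) c J j hj hJc
      simp only [mul_assoc] at hb ⊢
      exact hb
    rw [hQ1, hQ2, hQ3, hQ4]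
    ring


end
end

section
/- Let n and t be nonnegative integers. Then, in ℚ(q), ∑_{j=0}^{t} q^{j(n−t)} / [(q^{−j};q)_j · (q;q)_{t−j}] = [n choose t]_q. -/
open Finset

noncomputable section

lemma qq_pow_ne_one_s9 {k : ℕ} (hk : k ≠ 0) : qq ^ k ≠ 1 := by
  unfold qq
  rw [← RatFunc.algebraMap_X (K := ℚ), ← map_pow,
    ← map_one (algebraMap (Polynomial ℚ) F)]
  intro h
  have h2 := RatFunc.algebraMap_injective ℚ h
  have := congrArg (Polynomial.eval 0) h2
  simp [zero_pow hk] at this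

lemma one_sub_qq_pow_ne_zero {k : ℕ} (hk : k ≠ 0) : 1 - qq ^ k ≠ 0 :=
  sub_ne_zero.mpr (Ne.symm (qq_pow_ne_one_s9 hk))

lemma qP_succ (m : ℕ) : qPochF qq (m+1) = qPochF qq m * (1 - qq ^ (m+1)) := by
  rw [qPochF, Finset.prod_range_succ, ← qPochF, pow_succ']

lemma qP_zero : qPochF qq 0 = 1 := by simp [qPochF]

lemma qP_ne_zero (m : ℕ) : qPochF qq m ≠ 0 := by
  induction m with
  | zero => simp [qPochF]
  | succ k ih =>
    rw [qP_succ]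
    exact mul_ne_zero ih (one_sub_qq_pow_ne_zero (Nat.succ_ne_zero k))

/-- The summand of the Gauss binomial theorem. -/
def gaussTerm (t j : ℕ) : F :=
  (-1)^j * qq^(j*(j-1)/2) * (qPochF qq t / (qPochF qq j * qPochF qq (t-j)))

/-- **Gauss's q-binomial theorem.** -/
lemma gauss (x : F) (t : ℕ) :
    ∑ j ∈ range (t+1), gaussTerm t j * x^j = ∏ k ∈ range t, (1 - x * qq^k) := by
  induction t with
  | zero => simp [gaussTerm, qPochF]
  | succ t ih =>
    rw [Finset.prod_range_succ, ← ih]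
    have h0 : gaussTerm (t+1) 0 = 1 := by
      simp [gaussTerm, qP_zero, div_self (qP_ne_zero (t+1))]
    have h0' : gaussTerm t 0 = 1 := by
      simp [gaussTerm, qP_zero, div_self (qP_ne_zero t)]
    have htop : gaussTerm (t+1) (t+1) = -qq^t * gaussTerm t t := by
      simp only [gaussTerm, Nat.add_sub_cancel, Nat.sub_self, qP_zero,
        div_self (qP_ne_zero (t+1)), div_self (qP_ne_zero t)]
      simp only [mul_one]
      rw [div_self (qP_ne_zero (t+1)), div_self (qP_ne_zero t),
        show (t+1) * t / 2 = t*(t-1)/2 + t by simpa using Nat.triangle_succ t, pow_add]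
      ring
    have hmid : ∀ j < t, gaussTerm (t+1) (j+1)
        = gaussTerm t (j+1) - qq^t * gaussTerm t j := by
      intro j hj
      obtain ⟨d, rfl⟩ : ∃ d, t = j + 1 + d := ⟨t - (j+1), by omega⟩
      have e1 : j + 1 + d + 1 - (j + 1) = d + 1 := by omega
      have e2 : j + 1 + d - (j + 1) = d := by omega
      have e3 : j + 1 + d - j = d + 1 := by omega
      simp only [gaussTerm, e1, e2, e3]
      rw [show (j+1) * ((j+1)-1) / 2 = j*(j-1)/2 + j from Nat.triangle_succ j, pow_add]
      rw [show qPochF qq (j+1+d+1) = qPochF qq (j+1+d) * (1 - qq^(j+1+d+1)) from qP_succ _]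
      rw [show qPochF qq (j+1) = qPochF qq j * (1 - qq^(j+1)) from qP_succ _]
      rw [show qPochF qq (d+1) = qPochF qq d * (1 - qq^(d+1)) from qP_succ _]
      have n1 := qP_ne_zero j
      have n2 := qP_ne_zero d
      have n3 := qP_ne_zero (j+1+d)
      have n4 := one_sub_qq_pow_ne_zero (k := j+1) (by omega)
      have n5 := one_sub_qq_pow_ne_zero (k := d+1) (by omega)
      have n6 := one_sub_qq_pow_ne_zero (k := j+1+d+1) (by omega)
      field_simp
      ring
    rw [Finset.sum_range_succ' (fun j => gaussTerm (t+1) j * x^j) (t+1)]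
    rw [Finset.sum_range_succ (fun j => gaussTerm (t+1) (j+1) * x^(j+1)) t]
    have hsum : ∑ j ∈ range t, gaussTerm (t+1) (j+1) * x^(j+1)
        = ∑ j ∈ range t, (gaussTerm t (j+1) - qq^t * gaussTerm t j) * x^(j+1) :=
      Finset.sum_congr rfl (fun j hj => by rw [hmid j (Finset.mem_range.mp hj)])
    have hA : ∑ j ∈ range t, (gaussTerm t (j+1) - qq^t * gaussTerm t j) * x^(j+1)
        = (∑ j ∈ range t, gaussTerm t (j+1) * x^(j+1))
          - qq^t * x * ∑ j ∈ range t, gaussTerm t j * x^j := by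
      rw [Finset.mul_sum, ← Finset.sum_sub_distrib]
      exact Finset.sum_congr rfl (fun j _ => by ring)
    have hS1 : ∑ j ∈ range (t+1), gaussTerm t j * x^j
        = (∑ j ∈ range t, gaussTerm t (j+1) * x^(j+1)) + 1 := by
      rw [Finset.sum_range_succ' (fun j => gaussTerm t j * x^j) t, h0']
      ring
    have hS2 : ∑ j ∈ range (t+1), gaussTerm t j * x^j
        = (∑ j ∈ range t, gaussTerm t j * x^j) + gaussTerm t t * x^t :=
      Finset.sum_range_succ _ t
    have ha : ∑ j ∈ range t, gaussTerm t (j+1) * x^(j+1)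
        = (∑ j ∈ range t, gaussTerm t j * x^j) + gaussTerm t t * x^t - 1 := by
      linear_combination hS2 - hS1
    rw [hsum, hA, htop, h0, ha, hS2]
    ring

/-- Closed form for `(q^{-j}; q)_j`. -/
lemma poch_neg (j : ℕ) :
    qPochF (qq ^ (-(j:ℤ))) j
      = (-1)^j * qq^(j*(j-1)/2) * qPochF qq j / qq^(j*j) := by
  have hfac : ∀ m ∈ range j, (1 - qq ^ (-(j:ℤ)) * qq ^ m)
      = (-(qq^m/qq^j)) * (1 - qq^(j-m)) := by
    intro m hm
    have hm' := Finset.mem_range.mp hm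
    have hpow : qq^m * qq^(j-m) = qq^j := by rw [← pow_add]; congr 1; omega
    have hz : qq ^ (-(j:ℤ)) = (qq^j)⁻¹ := by
      rw [zpow_neg, zpow_natCast]
    rw [hz]
    have hnz : qq^j ≠ 0 := pow_ne_zero _ qq_ne_zero
    field_simp
    linear_combination -hpow
  rw [qPochF, Finset.prod_congr rfl hfac, Finset.prod_mul_distrib]
  have h1 : ∏ m ∈ range j, (-(qq^m/qq^j)) = (-1)^j * qq^(j*(j-1)/2) / qq^(j*j) := by
    have : ∀ m ∈ range j, (-(qq^m/qq^j)) = (-1) * (qq^m / qq^j) := by intros; ring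
    rw [Finset.prod_congr rfl this, Finset.prod_mul_distrib, Finset.prod_const,
      Finset.prod_div_distrib, Finset.prod_const, Finset.prod_pow_eq_pow_sum,
      Finset.sum_range_id, Finset.card_range, ← pow_mul]
    ring
  have h2 : ∏ m ∈ range j, (1 - qq^(j-m)) = qPochF qq j := by
    have hq : qPochF qq j = ∏ m ∈ range j, (1 - qq^(m+1)) := by
      rw [qPochF]
      exact Finset.prod_congr rfl fun m _ => by rw [← pow_succ']
    rw [hq, ← Finset.prod_range_reflect (fun m => 1 - qq^(m+1)) j]
    refine Finset.prod_congr rfl fun m hm => ?_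
    have hm' := Finset.mem_range.mp hm
    have : j - m = j - 1 - m + 1 := by omega
    rw [this]
  rw [h1, h2]
  ring

lemma tri_cast (j : ℕ) : ((j*(j-1)/2 : ℕ) : ℤ) * 2 = (j:ℤ)*j - j := by
  have hev : 2 ∣ j*(j-1) := by
    rcases Nat.even_or_odd j with h | h
    · exact Dvd.dvd.mul_right h.two_dvd _
    · exact Dvd.dvd.mul_left (Nat.Odd.sub_odd h odd_one).two_dvd _
  have h1 : j*(j-1)/2 * 2 = j*(j-1) := Nat.div_mul_cancel hev
  have h2 : j * (j-1) + j = j * j := by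
    cases j with
    | zero => simp
    | succ k => simp [Nat.succ_sub_one]; ring
  have h1' := congrArg (Nat.cast (R := ℤ)) h1
  push_cast at h1'
  have h2' := congrArg (Nat.cast (R := ℤ)) h2
  push_cast at h2'
  omega

/-- One term of the sum, rewritten as a Gauss-theorem summand. -/
lemma term_eq (n t j : ℕ) :
    qq ^ ((j:ℤ) * ((n:ℤ) - t)) / (qPochF (qq ^ (-(j:ℤ))) j * qPochF qq (t-j))
    = gaussTerm t j * (qq ^ ((n:ℤ) - t + 1))^j / qPochF qq t := by
  rw [poch_neg, gaussTerm]
  have key : qq ^ ((j:ℤ)*((n:ℤ)-t)) * qq^(j*j)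
      = qq^(j*(j-1)/2) * qq^(j*(j-1)/2) * (qq^((n:ℤ)-t+1))^j := by
    rw [← zpow_natCast qq (j*j), ← zpow_natCast qq (j*(j-1)/2),
      ← zpow_natCast (qq^((n:ℤ)-(t:ℤ)+1)) j, ← zpow_mul,
      ← zpow_add₀ qq_ne_zero, ← zpow_add₀ qq_ne_zero, ← zpow_add₀ qq_ne_zero]
    congr 1
    have h1 := tri_cast j
    have hjj : ((j*j : ℕ) : ℤ) = (j:ℤ)*j := by push_cast; ring
    linear_combination hjj - h1
  have hz1 : qq ^ ((j:ℤ)*((n:ℤ)-t))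
      = qq^(j*(j-1)/2) * qq^(j*(j-1)/2) * (qq^((n:ℤ)-t+1))^j / qq^(j*j) := by
    rw [eq_div_iff (pow_ne_zero _ qq_ne_zero)]
    linear_combination key
  rw [hz1]
  have n1 := qP_ne_zero j
  have n2 := qP_ne_zero (t-j)
  have n3 := qP_ne_zero t
  have n4 : qq^(j*j) ≠ 0 := pow_ne_zero _ qq_ne_zero
  have n5 : qq^(j*(j-1)/2) ≠ 0 := pow_ne_zero _ qq_ne_zero
  have n6 : (qq^((n:ℤ)-(t:ℤ)+1))^j ≠ 0 := pow_ne_zero _ (zpow_ne_zero _ qq_ne_zero)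
  rcases Nat.even_or_odd j with h | h <;> rw [h.neg_one_pow] <;>
  · set u := qq^(j*(j-1)/2)
    set w := qq^(j*j)
    set v := (qq^((n:ℤ)-(t:ℤ)+1))^j
    field_simp

/-- **Lemma 3.4 / prop-sum**: for nonnegative integers `n, t`,
`∑_{j=0}^{t} q^{j(n-t)} / ((q^{-j};q)_j (q;q)_{t-j}) = [n choose t]_q`. -/
theorem qbinom_as_sum (n t : ℕ) :
    (∑ j ∈ Finset.range (t + 1),
        qq ^ ((j : ℤ) * ((n : ℤ) - t)) /
          (qPochF (qq ^ (-(j : ℤ))) j * qPochF qq (t - j))) =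
      qbinom n t := by
  rw [Finset.sum_congr rfl (fun j _ => term_eq n t j), ← Finset.sum_div, gauss, qbinom]
  rfl

end
end

section
/- Let s be a positive integer, let w be a permutation of {1,…,s}, and let r = (r_0,…,r_p) be positive integers with r_0 + ⋯ + r_p = s. Then N_{w,r} := ∑_{j=1}^s e_j(w,r) ≥ max{r_1,…,r_p}, and moreover for every i ∈ {1,…,s}, ∑_{j=1, j≠i}^{s} e_j(w,r) ≥ max{r_1,…,r_p} − 1. -/
open Finset

noncomputable section

/-- Partial sums `ρ_l = r_0 + r_1 + ⋯ + r_l` of the block sizes. -/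
def blockSum (r : ℕ → ℕ) (l : ℕ) : ℕ := ∑ i ∈ Finset.range (l + 1), r i

/-- `a` and `b` lie in a common block `R_l = {ρ_{l-1}+1, …, ρ_l}` for some `l ∈ {1,…,p}`. -/
def inSameR (p : ℕ) (r : ℕ → ℕ) (a b : ℕ) : Prop :=
  ∃ l, 1 ≤ l ∧ l ≤ p ∧ a ∈ Finset.Ioc (blockSum r (l - 1)) (blockSum r l) ∧
    b ∈ Finset.Ioc (blockSum r (l - 1)) (blockSum r l)

open Classical in
/-- `χ({a,b} ⊆ R_l for some l ∈ {1,…,p})`. -/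
def chiR (p : ℕ) (r : ℕ → ℕ) (a b : ℕ) : ℕ := if inSameR p r a b then 1 else 0

open Classical in
/-- The weight `e_j(w,r) = u_j(w) + χ({w(j),w(j-1)} ⊆ R_i for some i)`, where
`u_j(w) = 1` if `w(j-1) < w(j)` and `u_j(w) = 0` otherwise. -/
def ew (p : ℕ) (r : ℕ → ℕ) (w : ℕ → ℕ) (j : ℕ) : ℕ :=
  (if w (j - 1) < w j then 1 else 0) + chiR p r (w j) (w (j - 1))

theorem path_weight_exists_T (s p : ℕ) (r w : ℕ → ℕ) (hw0 : w 0 = 0)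
    (hw : Set.BijOn w (Set.Icc 1 s) (Set.Icc 1 s))
    (hrsum : ∑ i ∈ Finset.range (p + 1), r i = s)
    (l : ℕ) (hl1 : 1 ≤ l) (hlp : l ≤ p) :
    ∃ T : Finset ℕ, T ⊆ Finset.Icc 1 s ∧ r l ≤ T.card ∧
      ∀ j ∈ T, 1 ≤ ew p r w j := by
  classical
  have hab : blockSum r l = blockSum r (l - 1) + r l := by
    unfold blockSum
    rw [show l + 1 = (l - 1 + 1) + 1 by omega, Finset.sum_range_succ,
      show l - 1 + 1 = l by omega]
  have hbs : blockSum r l ≤ s := by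
    rw [← hrsum]
    exact Finset.sum_le_sum_of_subset (Finset.range_subset_range.2 (by omega))
  set A : Finset ℕ := (Finset.Icc 1 s).filter
    (fun j => w j ∈ Finset.Ioc (blockSum r (l - 1)) (blockSum r l)) with hA
  have hAmem : ∀ j ∈ A, j ∈ Finset.Icc 1 s ∧
      blockSum r (l - 1) < w j ∧ w j ≤ blockSum r l := by
    intro j hj
    rw [hA, Finset.mem_filter, Finset.mem_Ioc] at hj
    exact ⟨hj.1, hj.2⟩
  have hAcard : A.card = r l := by
    have := Finset.card_bij (fun j (_ : j ∈ A) => w j)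
      (fun j hj => by
        rw [hA, Finset.mem_filter] at hj; exact hj.2)
      (fun j1 h1 j2 h2 heq => by
        apply hw.injOn _ _ heq
        · have := (hAmem j1 h1).1; rw [Finset.mem_Icc] at this
          exact Set.mem_Icc.2 this
        · have := (hAmem j2 h2).1; rw [Finset.mem_Icc] at this
          exact Set.mem_Icc.2 this)
      (fun y hy => by
        rw [Finset.mem_Ioc] at hy
        have hy' : y ∈ Set.Icc 1 s := Set.mem_Icc.2 ⟨by omega, by omega⟩
        obtain ⟨j, hj, hjy⟩ := hw.surjOn hy'
        refine ⟨j, ?_, hjy⟩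
        rw [hA, Finset.mem_filter, Finset.mem_Icc, hjy, Finset.mem_Ioc]
        rw [Set.mem_Icc] at hj
        exact ⟨hj, by omega, by omega⟩)
    rw [this, Nat.card_Ioc]
    omega
  set P : ℕ → Prop := fun k => 1 ≤ k ∧ w (k - 1) ≤ blockSum r l with hPdef
  have hP1 : P 1 := ⟨le_refl 1, by simp [hw0]⟩
  -- bad positions have previous value above the block
  have hbad : ∀ j ∈ A, ew p r w j = 0 → blockSum r l < w (j - 1) := by
    intro j hj h0
    by_contra hle
    push_neg at hle
    obtain ⟨-, hja, hjb⟩ := hAmem j hj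
    have h1 : ¬ w (j - 1) < w j := by
      intro h; simp [ew, h] at h0
    have h2 : inSameR p r (w j) (w (j - 1)) :=
      ⟨l, hl1, hlp, Finset.mem_Ioc.2 ⟨hja, hjb⟩, Finset.mem_Ioc.2 ⟨by omega, hle⟩⟩
    simp [ew, chiR, h1, h2] at h0
  have hj2 : ∀ j ∈ A, ew p r w j = 0 → 2 ≤ j := by
    intro j hj h0
    have h := hbad j hj h0
    have hj1 := (hAmem j hj).1
    rw [Finset.mem_Icc] at hj1
    by_contra hc
    have : j = 1 := by omega
    rw [this] at h
    simp [hw0] at h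
  -- facts about the rescue index K j = findGreatest P (j-1)
  have hK1 : ∀ j ∈ A, ew p r w j = 0 → 1 ≤ Nat.findGreatest P (j - 1) := by
    intro j hj h0
    exact Nat.le_findGreatest (by have := hj2 j hj h0; omega) hP1
  have hKle : ∀ j, Nat.findGreatest P (j - 1) ≤ j - 1 := fun j => Nat.findGreatest_le _
  have hPK : ∀ j ∈ A, ew p r w j = 0 → P (Nat.findGreatest P (j - 1)) := by
    intro j hj h0
    exact Nat.findGreatest_spec (by have := hj2 j hj h0; omega) hP1
  have hKgt : ∀ j ∈ A, ew p r w j = 0 →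
      blockSum r l < w (Nat.findGreatest P (j - 1)) := by
    intro j hj h0
    set K := Nat.findGreatest P (j - 1) with hKd
    by_cases hc : K = j - 1
    · rw [hc]; exact hbad j hj h0
    · have hlt : K < j - 1 := lt_of_le_of_ne (hKle j) hc
      have hnp : ¬ P (K + 1) :=
        Nat.findGreatest_is_greatest (n := j - 1) (P := P) (by omega) (by omega)
      have hnp2 : ¬ (1 ≤ K + 1 ∧ w (K + 1 - 1) ≤ blockSum r l) := hnp
      push_neg at hnp2
      have := hnp2 (by omega)
      simpa using this
  have hKew : ∀ j ∈ A, ew p r w j = 0 →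
      1 ≤ ew p r w (Nat.findGreatest P (j - 1)) := by
    intro j hj h0
    have hasc : w (Nat.findGreatest P (j - 1) - 1) < w (Nat.findGreatest P (j - 1)) :=
      lt_of_le_of_lt (hPK j hj h0).2 (hKgt j hj h0)
    simp only [ew, if_pos hasc]
    exact Nat.le_add_right 1 _
  -- the map f
  set f : ℕ → ℕ := fun j => if ew p r w j = 0 then Nat.findGreatest P (j - 1) else j
    with hf
  have hfle : ∀ j ∈ A, f j ≤ j := by
    intro j hj
    simp only [hf]; beta_reduce
    split_ifs with h
    · have := hKle j; have := hj2 j hj h; omega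
    · exact le_refl j
  have hmono : ∀ j1 ∈ A, ∀ j2 ∈ A, j1 < j2 → f j1 < f j2 := by
    intro j1 h1 j2 h2 hlt
    have hf1 : f j1 ≤ j1 := hfle j1 h1
    by_cases hb2 : ew p r w j2 = 0
    · -- f j2 = K(j2) ≥ j1 + 1
      have hwj1 : w j1 ≤ blockSum r l := (hAmem j1 h1).2.2
      have hne : j1 ≠ j2 - 1 := by
        intro he
        have := hbad j2 h2 hb2
        rw [← he] at this
        omega
      have h21 : j1 + 1 ≤ j2 - 1 := by omega
      have hPj1 : P (j1 + 1) := ⟨by omega, by simpa using hwj1⟩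
      have : j1 + 1 ≤ Nat.findGreatest P (j2 - 1) := Nat.le_findGreatest h21 hPj1
      simp only [hf]; beta_reduce
      simp only [if_pos hb2]
      split_ifs with hb1
      · have := hKle j1; omega
      · omega
    · simp only [hf]; beta_reduce
      simp only [if_neg hb2]
      split_ifs with hb1
      · have := hKle j1; have := hj2 j1 h1 hb1; omega
      · omega
  have hinj : Set.InjOn f ↑A := by
    intro x hx y hy hxy
    rcases lt_trichotomy x y with h | h | h
    · exact absurd hxy (Nat.ne_of_lt (hmono x hx y hy h))
    · exact h
    · exact absurd hxy.symm (Nat.ne_of_lt (hmono y hy x hx h))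
  refine ⟨A.image f, ?_, ?_, ?_⟩
  · intro t ht
    obtain ⟨j, hj, hjt⟩ := Finset.mem_image.1 ht
    have hjIcc := (hAmem j hj).1
    rw [Finset.mem_Icc] at hjIcc
    rw [Finset.mem_Icc, ← hjt]
    simp only [hf]; beta_reduce
    split_ifs with h
    · have := hK1 j hj h; have := hKle j; omega
    · omega
  · rw [Finset.card_image_of_injOn hinj, hAcard]
  · intro t ht
    obtain ⟨j, hj, hjt⟩ := Finset.mem_image.1 ht
    rw [← hjt]
    simp only [hf]; beta_reduce
    split_ifs with h
    · exact hKew j hj h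
    · omega


/-- **Proposition 5.1 / prop-min**: for any permutation `w` of `{1,…,s}` (with
`w(0) = 0`) and positive block sizes `r_0,…,r_p` summing to `s`,
`N_{w,r} = ∑_{j=1}^s e_j(w,r) ≥ max{r_1,…,r_p}`, and for every `i ∈ {1,…,s}`,
`∑_{j≠i} e_j(w,r) ≥ max{r_1,…,r_p} - 1`. -/
theorem path_weight_lower_bound (s p : ℕ) (hs : 1 ≤ s)
    (r : ℕ → ℕ) (hrpos : ∀ i ≤ p, 1 ≤ r i)
    (hrsum : ∑ i ∈ Finset.range (p + 1), r i = s)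
    (w : ℕ → ℕ) (hw0 : w 0 = 0)
    (hw : Set.BijOn w (Set.Icc 1 s) (Set.Icc 1 s)) :
    (Finset.Icc 1 p).sup r ≤ ∑ j ∈ Finset.Icc 1 s, ew p r w j ∧
      ∀ i ∈ Finset.Icc 1 s,
        (Finset.Icc 1 p).sup r - 1 ≤ ∑ j ∈ (Finset.Icc 1 s).erase i, ew p r w j := by
  classical
  have main : ∀ l ∈ Finset.Icc 1 p, ∃ T : Finset ℕ, T ⊆ Finset.Icc 1 s ∧
      r l ≤ T.card ∧ ∀ j ∈ T, 1 ≤ ew p r w j := by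
    intro l hl
    rw [Finset.mem_Icc] at hl
    exact path_weight_exists_T s p r w hw0 hw hrsum l hl.1 hl.2
  constructor
  · apply Finset.sup_le
    intro l hl
    obtain ⟨T, hT1, hT2, hT3⟩ := main l hl
    calc r l ≤ T.card := hT2
      _ = ∑ _j ∈ T, 1 := by rw [Finset.card_eq_sum_ones]
      _ ≤ ∑ j ∈ T, ew p r w j := Finset.sum_le_sum hT3
      _ ≤ ∑ j ∈ Finset.Icc 1 s, ew p r w j :=
          Finset.sum_le_sum_of_subset hT1
  · intro i _hi
    rw [tsub_le_iff_right]
    apply Finset.sup_le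
    intro l hl
    obtain ⟨T, hT1, hT2, hT3⟩ := main l hl
    have h1 : T.erase i ⊆ (Finset.Icc 1 s).erase i := Finset.erase_subset_erase _ hT1
    have h2 : T.card - 1 ≤ (T.erase i).card := Finset.pred_card_le_card_erase
    have h3 : (T.erase i).card ≤ ∑ j ∈ T.erase i, ew p r w j := by
      rw [Finset.card_eq_sum_ones]
      exact Finset.sum_le_sum fun j hj => hT3 j (Finset.mem_of_mem_erase hj)
    have h4 : ∑ j ∈ T.erase i, ew p r w j ≤ ∑ j ∈ (Finset.Icc 1 s).erase i, ew p r w j :=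
      Finset.sum_le_sum_of_subset h1
    omega

end
end

section
/- Let s be a positive integer, let b, c, t be nonnegative integers, let r_0,…,r_p be positive integers with r_0 + ⋯ + r_p = s, and let k_1,…,k_s be integers with 1 ≤ k_i ≤ (s−1)c + b + t for all i. Then at least one of the following holds: (1) 1 ≤ k_i ≤ b for some i ∈ {1,…,s}; (2) −c ≤ k_i − k_j ≤ c−1 for some pair i < j with {i,j} ⊄ R_l for every l ∈ {1,…,p}; (3) −c−1 ≤ k_i − k_j ≤ c for some pair i < j with {i,j} ⊆ R_l for some l ∈ {1,…,p}; (4) there exist a permutation w of {1,…,s} (with w(0) := 0) and nonnegative integers d_1,…,d_s such that k_{w(1)} = b + d_1, k_{w(j)} − k_{w(j−1)} = c + χ({w(j),w(j−1)} ⊆ R_i for some i ∈ {1,…,p}) + d_j for 2 ≤ j ≤ s, with max{r_1,…,r_p} ≤ ∑_{j=1}^{s} [χ({w(j),w(j−1)} ⊆ R_i for some i ∈ {1,…,p}) + d_j] ≤ t, and d_j > 0 whenever w(j−1) < w(j) (1 ≤ j ≤ s). -/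
open Finset

noncomputable section

lemma inSameR_symm {p : ℕ} {r : ℕ → ℕ} {a b : ℕ} (h : inSameR p r a b) : inSameR p r b a := by
  obtain ⟨l, h1, h2, h3, h4⟩ := h
  exact ⟨l, h1, h2, h4, h3⟩

lemma chiR_pos {p : ℕ} {r : ℕ → ℕ} {a b : ℕ} (h : inSameR p r a b) : chiR p r a b = 1 := by
  simp [chiR, h]

lemma chiR_neg {p : ℕ} {r : ℕ → ℕ} {a b : ℕ} (h : ¬ inSameR p r a b) : chiR p r a b = 0 := by
  simp [chiR, h]

lemma chiR_zero_right (p : ℕ) (r : ℕ → ℕ) (a : ℕ) : chiR p r a 0 = 0 := by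
  apply chiR_neg
  rintro ⟨l, -, -, -, h4⟩
  simp [Finset.mem_Ioc] at h4

lemma not_inSameR_of_chiR {p : ℕ} {r : ℕ → ℕ} {a b : ℕ} (h : chiR p r a b = 0) :
    ¬ inSameR p r a b := by
  intro hS
  rw [chiR_pos hS] at h
  exact one_ne_zero h

lemma exists_sorting (s : ℕ) (hs : 1 ≤ s) (k : ℕ → ℕ) :
    ∃ w : ℕ → ℕ, w 0 = 0 ∧ Set.BijOn w (Set.Icc 1 s) (Set.Icc 1 s) ∧
      (∀ j j', 1 ≤ j → j < j' → j' ≤ s →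
        k (w j) ≤ k (w j') ∧ (k (w j) = k (w j') → w j' < w j)) := by
  classical
  set key : ℕ → ℕ := fun i => (s + 1) * k i + (s - i) with hkey
  have hmod : ∀ i, key i % (s + 1) = s - i := by
    intro i
    simp only [hkey, Nat.mul_add_mod]
    exact Nat.mod_eq_of_lt (by omega)
  have hinj : ∀ i j, i ≤ s → j ≤ s → 1 ≤ i → 1 ≤ j → key i = key j → i = j := by
    intro i j hi hj _ _ hij
    have h1 := hmod i
    have h2 := hmod j
    rw [hij] at h1
    omega
  set F := (Finset.Icc 1 s).image key with hF
  have hcard : F.card = s := by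
    rw [hF, Finset.card_image_of_injOn, Nat.card_Icc]
    · omega
    · intro i hi j hj hij
      simp only [Finset.coe_Icc, Set.mem_Icc] at hi hj
      exact hinj i j hi.2 hj.2 hi.1 hj.1 hij
  set e := F.orderEmbOfFin hcard with he
  set w : ℕ → ℕ := fun j => if h : 1 ≤ j ∧ j ≤ s then s - (e ⟨j - 1, by omega⟩) % (s + 1) else 0
    with hwdef
  have hmem : ∀ j (h1 : 1 ≤ j) (h2 : j ≤ s),
      key (w j) = e ⟨j - 1, by omega⟩ ∧ 1 ≤ w j ∧ w j ≤ s := by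
    intro j h1 h2
    have hin : (e ⟨j - 1, by omega⟩ : ℕ) ∈ F := Finset.orderEmbOfFin_mem F hcard _
    obtain ⟨i, hi, hik⟩ := Finset.mem_image.mp hin
    rw [Finset.mem_Icc] at hi
    have hwj : w j = i := by
      simp only [hwdef]
      rw [dif_pos (⟨h1, h2⟩ : 1 ≤ j ∧ j ≤ s), ← hik, hmod i]
      omega
    rw [hwj, hik]
    exact ⟨rfl, hi.1, hi.2⟩
  have hlt : ∀ j j', 1 ≤ j → j < j' → j' ≤ s → key (w j) < key (w j') := by
    intro j j' h1 h2 h3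
    have ha := (hmem j h1 (by omega)).1
    have hb := (hmem j' (by omega) h3).1
    rw [ha, hb]
    exact (F.orderEmbOfFin hcard).strictMono (by simp [Fin.mk_lt_mk]; omega)
  have hw0 : w 0 = 0 := by simp [hwdef]
  have hmaps : Set.MapsTo w (Set.Icc 1 s) (Set.Icc 1 s) := by
    intro j hj
    obtain ⟨-, h1, h2⟩ := hmem j hj.1 hj.2
    exact ⟨h1, h2⟩
  have hinjw : Set.InjOn w (Set.Icc 1 s) := by
    intro j hj j' hj' heq
    by_contra hne
    rcases Nat.lt_or_ge j j' with h | h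
    · have := hlt j j' hj.1 h hj'.2
      rw [heq] at this; omega
    · have := hlt j' j hj'.1 (by omega) hj.2
      rw [heq] at this; omega
  have hsurj : Set.SurjOn w (Set.Icc 1 s) (Set.Icc 1 s) := by
    intro i hi
    have hiF : key i ∈ F := Finset.mem_image_of_mem key (Finset.mem_Icc.mpr ⟨hi.1, hi.2⟩)
    have hiF' : key i ∈ Set.range ⇑(F.orderEmbOfFin hcard) := by
      rw [Finset.range_orderEmbOfFin]
      exact_mod_cast hiF
    obtain ⟨jf, hjf⟩ := hiF'
    refine ⟨jf.val + 1, ⟨by omega, by omega⟩, ?_⟩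
    obtain ⟨hkeq, hw1, hw2⟩ := hmem (jf.val + 1) (by omega) (by omega)
    have hfin : (⟨jf.val + 1 - 1, by omega⟩ : Fin s) = jf := by
      ext; simp
    rw [hfin] at hkeq
    rw [he] at hkeq
    rw [hjf] at hkeq
    exact hinj _ _ hw2 hi.2 hw1 hi.1 hkeq
  refine ⟨w, hw0, ⟨hmaps, hinjw, hsurj⟩, ?_⟩
  intro j j' h1 h2 h3
  have hk1 := hlt j j' h1 h2 h3
  obtain ⟨-, ha1, ha2⟩ := hmem j h1 (by omega)
  obtain ⟨-, hb1, hb2⟩ := hmem j' (by omega) h3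
  simp only [hkey] at hk1
  have hle : k (w j) ≤ k (w j') := by
    by_contra hc
    push_neg at hc
    have hmul : (s + 1) * k (w j') + (s + 1) ≤ (s + 1) * k (w j) := by
      have := Nat.mul_le_mul_left (s + 1) (show k (w j') + 1 ≤ k (w j) by omega)
      nlinarith
    have hx : s - w j' ≤ s := Nat.sub_le s _
    omega
  refine ⟨hle, fun heq => ?_⟩
  rw [heq] at hk1
  have := Nat.lt_of_add_lt_add_left hk1
  omega

/-- **The key lemma** (Lemma 5.2 / lem-key): for `1 ≤ k_i ≤ (s-1)c + b + t`, at least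
one of the four listed alternatives holds. -/
theorem key_lemma (s p b c t : ℕ) (hs : 1 ≤ s)
    (r : ℕ → ℕ) (hrpos : ∀ i ≤ p, 1 ≤ r i)
    (hrsum : ∑ i ∈ Finset.range (p + 1), r i = s)
    (k : ℕ → ℕ)
    (hk : ∀ i, 1 ≤ i → i ≤ s → 1 ≤ k i ∧ k i ≤ (s - 1) * c + b + t) :
    (∃ i, 1 ≤ i ∧ i ≤ s ∧ 1 ≤ k i ∧ k i ≤ b) ∨
    (∃ i j, 1 ≤ i ∧ i < j ∧ j ≤ s ∧ ¬ inSameR p r i j ∧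
      -(c : ℤ) ≤ (k i : ℤ) - (k j : ℤ) ∧ (k i : ℤ) - (k j : ℤ) ≤ (c : ℤ) - 1) ∨
    (∃ i j, 1 ≤ i ∧ i < j ∧ j ≤ s ∧ inSameR p r i j ∧
      -(c : ℤ) - 1 ≤ (k i : ℤ) - (k j : ℤ) ∧ (k i : ℤ) - (k j : ℤ) ≤ (c : ℤ)) ∨
    (∃ w : ℕ → ℕ, w 0 = 0 ∧ Set.BijOn w (Set.Icc 1 s) (Set.Icc 1 s) ∧
      ∃ d : ℕ → ℕ,
        k (w 1) = b + d 1 ∧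
        (∀ j, 2 ≤ j → j ≤ s →
          k (w j) = k (w (j - 1)) + c + chiR p r (w j) (w (j - 1)) + d j) ∧
        (Finset.Icc 1 p).sup r ≤
          (∑ j ∈ Finset.Icc 1 s, (chiR p r (w j) (w (j - 1)) + d j)) ∧
        (∑ j ∈ Finset.Icc 1 s, (chiR p r (w j) (w (j - 1)) + d j)) ≤ t ∧
        (∀ j, 1 ≤ j → j ≤ s → w (j - 1) < w j → 0 < d j)) := by
  classical
  by_cases h1 : (∃ i, 1 ≤ i ∧ i ≤ s ∧ 1 ≤ k i ∧ k i ≤ b)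
  · exact Or.inl h1
  by_cases h2 : (∃ i j, 1 ≤ i ∧ i < j ∧ j ≤ s ∧ ¬ inSameR p r i j ∧
      -(c : ℤ) ≤ (k i : ℤ) - (k j : ℤ) ∧ (k i : ℤ) - (k j : ℤ) ≤ (c : ℤ) - 1)
  · exact Or.inr (Or.inl h2)
  by_cases h3 : (∃ i j, 1 ≤ i ∧ i < j ∧ j ≤ s ∧ inSameR p r i j ∧
      -(c : ℤ) - 1 ≤ (k i : ℤ) - (k j : ℤ) ∧ (k i : ℤ) - (k j : ℤ) ≤ (c : ℤ))
  · exact Or.inr (Or.inr (Or.inl h3))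
  refine Or.inr (Or.inr (Or.inr ?_))
  push_neg at h1 h2 h3
  obtain ⟨w, hw0, hbij, hsort⟩ := exists_sorting s hs k
  have hwmem : ∀ j, 1 ≤ j → j ≤ s → 1 ≤ w j ∧ w j ≤ s := fun j hj hjs => hbij.mapsTo ⟨hj, hjs⟩
  have hkb : ∀ i, 1 ≤ i → i ≤ s → b + 1 ≤ k i := by
    intro i hi his
    have hk1 := (hk i hi his).1
    have := h1 i hi his hk1
    omega
  have hineq : ∀ j, 2 ≤ j → j ≤ s →
      k (w (j - 1)) + c + chiR p r (w j) (w (j - 1)) + (if w (j - 1) < w j then 1 else 0)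
        ≤ k (w j) := by
    intro j hj2 hjs
    obtain ⟨ha1, ha2⟩ := hwmem (j - 1) (by omega) (by omega)
    obtain ⟨hb1, hb2⟩ := hwmem j (by omega) hjs
    obtain ⟨hle, htie⟩ := hsort (j - 1) j (by omega) (by omega) hjs
    by_cases hS : inSameR p r (w j) (w (j - 1))
    · rw [chiR_pos hS]
      rcases Nat.lt_or_ge (w (j - 1)) (w j) with hlt | hge
      · rw [if_pos hlt]
        rcases le_or_gt (-(c : ℤ) - 1) ((k (w (j - 1)) : ℤ) - (k (w j) : ℤ)) with hc | hc
        · have := h3 (w (j - 1)) (w j) ha1 hlt hb2 (inSameR_symm hS) hc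
          omega
        · omega
      · rw [if_neg (by omega)]
        have hane : w (j - 1) ≠ w j := by
          intro h
          have := hbij.injOn (Set.mem_Icc.mpr ⟨(by omega : (1:ℕ) ≤ j - 1), by omega⟩)
            (Set.mem_Icc.mpr ⟨(by omega : (1:ℕ) ≤ j), hjs⟩) h
          omega
        have hlt' : w j < w (j - 1) := by omega
        rcases le_or_gt (-(c : ℤ) - 1) ((k (w j) : ℤ) - (k (w (j - 1)) : ℤ)) with hc | hc
        · have := h3 (w j) (w (j - 1)) hb1 hlt' ha2 hS hc
          omega
        · omega
    · rw [chiR_neg hS]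
      rcases Nat.lt_or_ge (w (j - 1)) (w j) with hlt | hge
      · rw [if_pos hlt]
        have hklt : k (w (j - 1)) < k (w j) := by
          rcases Nat.lt_or_ge (k (w (j - 1))) (k (w j)) with h | h
          · exact h
          · have heq : k (w (j - 1)) = k (w j) := by omega
            have := htie heq
            omega
        rcases le_or_gt (-(c : ℤ)) ((k (w (j - 1)) : ℤ) - (k (w j) : ℤ)) with hc | hc
        · have := h2 (w (j - 1)) (w j) ha1 hlt hb2 (fun hSS => hS (inSameR_symm hSS)) hc
          omega
        · omega
      · rw [if_neg (by omega)]
        have hane : w (j - 1) ≠ w j := by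
          intro h
          have := hbij.injOn (Set.mem_Icc.mpr ⟨(by omega : (1:ℕ) ≤ j - 1), by omega⟩)
            (Set.mem_Icc.mpr ⟨(by omega : (1:ℕ) ≤ j), hjs⟩) h
          omega
        have hlt' : w j < w (j - 1) := by omega
        rcases le_or_gt (-(c : ℤ)) ((k (w j) : ℤ) - (k (w (j - 1)) : ℤ)) with hc | hc
        · have := h2 (w j) (w (j - 1)) hb1 hlt' ha2 hS hc
          omega
        · omega
  set d : ℕ → ℕ := fun j =>
    if j = 1 then k (w 1) - b
    else k (w j) - (k (w (j - 1)) + c + chiR p r (w j) (w (j - 1))) with hd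
  have hw1mem := hwmem 1 le_rfl hs
  have hd1 : k (w 1) = b + d 1 := by
    have := hkb (w 1) hw1mem.1 hw1mem.2
    simp only [hd, if_pos rfl]
    omega
  have hd1pos : 1 ≤ d 1 := by
    have := hkb (w 1) hw1mem.1 hw1mem.2
    simp only [hd, if_pos rfl]
    omega
  have hineq' : ∀ j, 2 ≤ j → j ≤ s →
      k (w (j - 1)) + c + chiR p r (w j) (w (j - 1)) ≤ k (w j) := by
    intro j hj2 hjs
    have := hineq j hj2 hjs
    split at this <;> omega
  have hstep : ∀ j, 2 ≤ j → j ≤ s →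
      k (w j) = k (w (j - 1)) + c + chiR p r (w j) (w (j - 1)) + d j := by
    intro j hj2 hjs
    have h := hineq' j hj2 hjs
    simp only [hd, if_neg (by omega : ¬ j = 1)]
    omega
  have hpos : ∀ j, 1 ≤ j → j ≤ s → w (j - 1) < w j → 0 < d j := by
    intro j hj1 hjs hlt
    rcases Nat.eq_or_lt_of_le hj1 with h | h
    · rw [← h]
      exact hd1pos
    · have h1' := hineq j (by omega) hjs
      rw [if_pos hlt] at h1'
      have h2' := hstep j (by omega) hjs
      omega
  have htel : ∀ j, 1 ≤ j → j ≤ s →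
      k (w j) = b + (j - 1) * c + ∑ i ∈ Finset.Icc 1 j, (chiR p r (w i) (w (i - 1)) + d i) := by
    intro j hj1
    induction j, hj1 using Nat.le_induction with
    | base =>
      intro _
      rw [Finset.Icc_self, Finset.sum_singleton]
      norm_num [hw0, chiR_zero_right]
      omega
    | succ n hn ih =>
      intro hns
      have ihh := ih (by omega)
      have hst := hstep (n + 1) (by omega) hns
      rw [Finset.sum_Icc_succ_top (by omega : 1 ≤ n + 1)]
      simp only [Nat.add_sub_cancel] at hst ⊢
      have hnc : n * c = (n - 1) * c + c := by
        calc n * c = (n - 1 + 1) * c := by rw [Nat.sub_add_cancel hn]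
        _ = (n - 1) * c + c := by ring
      rw [hst, ihh, hnc]
      ring
  have hws := hwmem s hs le_rfl
  have htels := htel s hs le_rfl
  have hupper : (∑ i ∈ Finset.Icc 1 s, (chiR p r (w i) (w (i - 1)) + d i)) ≤ t := by
    have hk2 := (hk (w s) hws.1 hws.2).2
    linarith
  have hbs : ∀ l, 1 ≤ l → l ≤ p →
      blockSum r (l - 1) + r l = blockSum r l ∧ blockSum r l ≤ s ∧ 1 ≤ blockSum r (l - 1) := by
    intro l h1' h2'
    refine ⟨?_, ?_, ?_⟩
    · unfold blockSum
      have hll : l - 1 + 1 = l := by omega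
      rw [hll, Finset.sum_range_succ]
    · rw [← hrsum]
      unfold blockSum
      apply Finset.sum_le_sum_of_subset
      exact Finset.range_subset_range.mpr (by omega)
    · unfold blockSum
      calc 1 ≤ r 0 := hrpos 0 (by omega)
      _ ≤ ∑ i ∈ Finset.range (l - 1 + 1), r i :=
        Finset.single_le_sum (f := r) (fun i _ => Nat.zero_le _) (Finset.mem_range.mpr (by omega))
  have hlow : ∀ l, 1 ≤ l → l ≤ p →
      r l ≤ ∑ i ∈ Finset.Icc 1 s, (chiR p r (w i) (w (i - 1)) + d i) := by
    intro l hl1 hlp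
    obtain ⟨hbs1, hbs2, hbs3⟩ := hbs l hl1 hlp
    set lo := blockSum r (l - 1) with hlo
    set hib := blockSum r l with hhib
    set B := Finset.Ioc lo hib with hB
    have hsame : ∀ a b', a ∈ B → b' ∈ B → inSameR p r a b' := by
      intro a b' ha hb'
      exact ⟨l, hl1, hlp, ha, hb'⟩
    set N : ℕ → ℕ := fun j => ∑ i ∈ Finset.Icc 1 j, (if w i ∈ B then 1 else 0) with hN
    set T : ℕ → ℕ := fun j => ∑ i ∈ Finset.Icc 1 j, (chiR p r (w i) (w (i - 1)) + d i) with hT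
    have hinv : ∀ j, 1 ≤ j → j ≤ s → N j + (if hib < w j then 1 else 0) ≤ T j := by
      intro j hj1
      induction j, hj1 using Nat.le_induction with
      | base =>
        intro _
        have hN1 : N 1 = (if w 1 ∈ B then 1 else 0) := by
          simp only [hN, Finset.Icc_self, Finset.sum_singleton]
        have hT1 : 1 ≤ T 1 := by
          simp only [hT, Finset.Icc_self, Finset.sum_singleton]
          omega
        have hbw : hib < w 1 → w 1 ∉ B := by
          intro h hmem
          rw [hB, Finset.mem_Ioc] at hmem
          omega
        by_cases hc : hib < w 1
        · rw [if_pos hc, hN1, if_neg (hbw hc)]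
          omega
        · rw [if_neg hc, hN1]
          split <;> omega
      | succ n hn ih =>
        intro hns
        have ihh := ih (by omega)
        have hTstep : T (n + 1) = T n + (chiR p r (w (n + 1)) (w n) + d (n + 1)) := by
          simp only [hT]
          rw [Finset.sum_Icc_succ_top (by omega : 1 ≤ n + 1)]
          simp
        have hNstep : N (n + 1) = N n + (if w (n + 1) ∈ B then 1 else 0) := by
          simp only [hN]
          rw [Finset.sum_Icc_succ_top (by omega : 1 ≤ n + 1)]
        -- helper: if the step is zero then w (n+1) < w n and blocks differ
        have hzero : chiR p r (w (n + 1)) (w n) + d (n + 1) = 0 →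
            w (n + 1) < w n ∧ ¬ inSameR p r (w (n + 1)) (w n) := by
          intro hz
          have hchi : chiR p r (w (n + 1)) (w n) = 0 := by omega
          have hdz : d (n + 1) = 0 := by omega
          have hne : w n ≠ w (n + 1) := by
            intro h
            have := hbij.injOn (Set.mem_Icc.mpr ⟨hn, by omega⟩)
              (Set.mem_Icc.mpr ⟨(by omega : (1:ℕ) ≤ n + 1), hns⟩) h
            omega
          constructor
          · by_contra hge
            push_neg at hge
            have hlt2 : w n < w (n + 1) := by omega
            have := hpos (n + 1) (by omega) hns (by simpa using hlt2)
            omega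
          · exact not_inSameR_of_chiR hchi
        by_cases hmB : w (n + 1) ∈ B
        · have hnotgt : ¬ hib < w (n + 1) := by
            have := Finset.mem_Ioc.mp (by rw [hB] at hmB; exact hmB)
            omega
          rw [if_neg hnotgt, hNstep, hTstep, if_pos hmB]
          by_cases hdelta : 1 ≤ chiR p r (w (n + 1)) (w n) + d (n + 1)
          · have hNT : N n ≤ T n := le_trans (Nat.le_add_right _ _) ihh
            omega
          · have hz := hzero (by omega)
            have hmB' := Finset.mem_Ioc.mp (by rw [hB] at hmB; exact hmB)
            have hwn_gt : hib < w n := by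
              rcases Nat.lt_or_ge hib (w n) with h | h
              · exact h
              · have hwnB : w n ∈ B := by
                  rw [hB, Finset.mem_Ioc]
                  omega
                exact absurd (hsame _ _ hmB hwnB) hz.2
            rw [if_pos hwn_gt] at ihh
            omega
        · rw [hNstep, if_neg hmB, hTstep]
          by_cases hgt : hib < w (n + 1)
          · rw [if_pos hgt]
            by_cases hdelta : 1 ≤ chiR p r (w (n + 1)) (w n) + d (n + 1)
            · have hNT : N n ≤ T n := le_trans (Nat.le_add_right _ _) ihh
              omega
            · have hz := hzero (by omega)
              have hwn_gt : hib < w n := by omega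
              rw [if_pos hwn_gt] at ihh
              omega
          · rw [if_neg hgt]
            have hNT : N n ≤ T n := le_trans (Nat.le_add_right _ _) ihh
            omega
    have hfil : ((Finset.Icc 1 s).filter (fun i => w i ∈ B)).image w = B := by
      apply Finset.Subset.antisymm
      · intro x hx
        obtain ⟨i, hi, rfl⟩ := Finset.mem_image.mp hx
        exact (Finset.mem_filter.mp hi).2
      · intro x hx
        have hx' := Finset.mem_Ioc.mp (by rw [hB] at hx; exact hx)
        have hxs : x ∈ Set.Icc 1 s := ⟨by omega, by omega⟩
        obtain ⟨j, hj, hwj⟩ := hbij.surjOn hxs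
        rw [Set.mem_Icc] at hj
        apply Finset.mem_image.mpr
        refine ⟨j, Finset.mem_filter.mpr ⟨Finset.mem_Icc.mpr ⟨hj.1, hj.2⟩, by rw [hwj]; exact hx⟩, hwj⟩
    have hcardB : B.card = r l := by
      rw [hB, Nat.card_Ioc]
      omega
    have hinj2 : Set.InjOn w ↑((Finset.Icc 1 s).filter (fun i => w i ∈ B)) := by
      apply hbij.injOn.mono
      intro x hx
      simp only [Finset.coe_filter, Set.mem_setOf_eq, Finset.mem_Icc] at hx
      exact Set.mem_Icc.mpr ⟨hx.1.1, hx.1.2⟩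
    have hNs : N s = r l := by
      have : N s = ((Finset.Icc 1 s).filter (fun i => w i ∈ B)).card := by
        rw [hN, Finset.card_filter]
      rw [this, ← Finset.card_image_of_injOn hinj2, hfil, hcardB]
    have hfin := hinv s hs le_rfl
    rw [hNs] at hfin
    have hTs : T s = ∑ i ∈ Finset.Icc 1 s, (chiR p r (w i) (w (i - 1)) + d i) := by
      simp only [hT]
    rw [hTs] at hfin
    split at hfin <;> omega
  refine ⟨w, hw0, hbij, d, hd1, hstep, ?_, hupper, hpos⟩
  apply Finset.sup_le
  intro l hl
  rw [Finset.mem_Icc] at hl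
  exact hlow l hl.1 hl.2

end
end

section
/- Let s be a positive integer with s ≤ n, let b, c be nonnegative integers, let n_0,…,n_p be positive integers with n_0 + ⋯ + n_p = n, let r_0,…,r_p be positive integers with r_0 + ⋯ + r_p = s and r_i ≤ min{s, n_i} for i = 0,…,p, and let k_1,…,k_s be integers with 1 ≤ k_i ≤ (s−1)c + b + t_s for all i, where t_s is defined from (n_0,…,n_p) as in the context. Then at least one of the following holds: (i) 1 ≤ k_i ≤ b for some i ∈ {1,…,s}; (ii) −c ≤ k_i − k_j ≤ c−1 for some pair i < j with {i,j} ⊄ R_l for every l ∈ {1,…,p}; (iii) −c−1 ≤ k_i − k_j ≤ c for some pair i < j with {i,j} ⊆ R_l for some l ∈ {1,…,p}. -/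
open Finset

noncomputable section

private lemma sum_split0 (g : ℕ → ℕ) (p : ℕ) :
    ∑ i ∈ Finset.range (p + 1), g i = g 0 + ∑ i ∈ Finset.Icc 1 p, g i := by
  have h : Finset.range (p+1) = insert 0 (Finset.Icc 1 p) := by
    ext x; simp [Finset.mem_range, Finset.mem_Icc, Nat.lt_succ_iff]; omega
  rw [h, Finset.sum_insert (by simp)]

private lemma sum_splitIcc (g : ℕ → ℕ) (j p : ℕ) (h1 : 1 ≤ j) (h2 : j ≤ p + 1) :
    ∑ i ∈ Finset.Icc 1 p, g i
      = (∑ i ∈ Finset.Icc 1 (j-1), g i) + ∑ i ∈ Finset.Icc j p, g i := by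
  have e1 : Finset.Icc 1 p = Finset.Ioc 0 p := by
    rw [← Finset.Icc_add_one_left_eq_Ioc]; rfl
  have e2 : Finset.Icc j p = Finset.Ioc (j-1) p := by
    rw [← Finset.Icc_add_one_left_eq_Ioc]; congr 1; omega
  have e3 : Finset.Icc 1 (j-1) = Finset.Ioc 0 (j-1) := by
    rw [← Finset.Icc_add_one_left_eq_Ioc]; rfl
  rw [e1, e2, e3]
  exact (Finset.sum_Ioc_consecutive g (by omega) (by omega)).symm

private lemma perm_sum (p : ℕ) (ns nn : ℕ → ℕ)
    (hperm : Multiset.map ns (Finset.Icc 1 p).val = Multiset.map nn (Finset.Icc 1 p).val)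
    (g : ℕ → ℕ) : ∑ l ∈ Finset.Icc 1 p, g (ns l) = ∑ l ∈ Finset.Icc 1 p, g (nn l) := by
  have h := congrArg (fun m => (Multiset.map g m).sum) hperm
  simp only [Multiset.map_map] at h
  have e : ∀ f : ℕ → ℕ, ∑ l ∈ Finset.Icc 1 p, f l = (Multiset.map f (Finset.Icc 1 p).val).sum :=
    fun f => rfl
  rw [e, e]
  simpa [Function.comp] using h

private lemma arith_main (p n s : ℕ) (hs1 : 1 ≤ s) (hsn : s ≤ n)
    (nn : ℕ → ℕ) (hnpos : ∀ i ≤ p, 1 ≤ nn i)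
    (hnsum : ∑ i ∈ Finset.range (p + 1), nn i = n)
    (r : ℕ → ℕ)
    (hrsum : ∑ i ∈ Finset.range (p + 1), r i = s)
    (hrle : ∀ i ≤ p, r i ≤ min s (nn i))
    (ns : ℕ → ℕ) (hns0 : ns 0 = 1)
    (hmono : ∀ i, 1 ≤ i → i + 1 ≤ p → ns i ≤ ns (i + 1))
    (hperm : Multiset.map ns (Finset.Icc 1 p).val = Multiset.map nn (Finset.Icc 1 p).val)
    (ts : ℕ → ℕ)
    (hts0 : ∀ s', 1 ≤ s' → s' ≤ nn 0 + p → ts s' = 0)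
    (htsj : ∀ j s', 1 ≤ j → j ≤ p →
      n - (∑ i ∈ Finset.Icc j p, ns i) + (p - j + 1) * ns (j - 1) + 1 ≤ s' →
      s' ≤ n - (∑ i ∈ Finset.Icc (j + 1) p, ns i) + (p - j) * ns j →
      ts s' = (s' - nn 0 - (∑ i ∈ Finset.Icc 1 (j - 1), ns i) - 1) / (p - j + 1))
    (t : ℕ) (ht : 1 ≤ t) :
    ts s ≤ (t - 1) + ∑ l ∈ Finset.Icc 1 p, (r l - t) := by
  classical
  have hnn0 : nn 0 + ∑ i ∈ Finset.Icc 1 p, nn i = n := by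
    rw [← hnsum]; exact (sum_split0 nn p).symm
  have hr0 : r 0 + ∑ l ∈ Finset.Icc 1 p, r l = s := by
    rw [← hrsum]; exact (sum_split0 r p).symm
  have hsum_ns : ∑ i ∈ Finset.Icc 1 p, ns i = ∑ i ∈ Finset.Icc 1 p, nn i :=
    perm_sum p ns nn hperm id
  have hminper : ∑ l ∈ Finset.Icc 1 p, min (ns l) t = ∑ l ∈ Finset.Icc 1 p, min (nn l) t :=
    perm_sum p ns nn hperm (fun x => min x t)
  have hα : (s - nn 0) - (∑ l ∈ Finset.Icc 1 p, min (ns l) t)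
      ≤ ∑ l ∈ Finset.Icc 1 p, (r l - t) := by
    have h1 : ∑ l ∈ Finset.Icc 1 p, r l
        = (∑ l ∈ Finset.Icc 1 p, min (r l) t) + ∑ l ∈ Finset.Icc 1 p, (r l - t) := by
      rw [← Finset.sum_add_distrib]; apply Finset.sum_congr rfl; intro l _; omega
    have h2 : ∑ l ∈ Finset.Icc 1 p, min (r l) t ≤ ∑ l ∈ Finset.Icc 1 p, min (nn l) t := by
      apply Finset.sum_le_sum; intro l hl
      simp only [Finset.mem_Icc] at hl
      have := hrle l (by omega); omega
    have h3 : r 0 ≤ nn 0 := by have := hrle 0 (by omega); omega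
    omega
  by_cases hcase : s ≤ nn 0 + p
  · rw [hts0 s hs1 hcase]; omega
  push_neg at hcase
  have hp1 : 1 ≤ p := by
    by_contra hp
    have hp0 : p = 0 := by omega
    subst hp0
    simp at hnsum
    omega
  set P : ℕ → Prop := fun j => 1 ≤ j ∧
    n - (∑ i ∈ Finset.Icc j p, ns i) + (p - j + 1) * ns (j-1) + 1 ≤ s with hP
  have hP1 : P 1 := by
    constructor
    · omega
    · have e : (1:ℕ) - 1 = 0 := rfl
      rw [e, hns0, Nat.mul_one]
      omega
  set j := Nat.findGreatest P p with hj
  have hPj : P j := Nat.findGreatest_spec hp1 hP1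
  have hjp : j ≤ p := Nat.findGreatest_le p
  obtain ⟨hj1, hLj⟩ := hPj
  set C := ∑ i ∈ Finset.Icc 1 (j-1), ns i with hC
  set q := p - j + 1 with hq
  have hqpos : 1 ≤ q := by omega
  have hsplitj : ∑ i ∈ Finset.Icc 1 p, ns i = C + ∑ i ∈ Finset.Icc j p, ns i :=
    sum_splitIcc ns j p hj1 (by omega)
  have hsplitj1 : ∑ i ∈ Finset.Icc 1 p, ns i
      = (∑ i ∈ Finset.Icc 1 j, ns i) + ∑ i ∈ Finset.Icc (j+1) p, ns i := by
    have h := sum_splitIcc ns (j+1) p (by omega) (by omega)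
    simpa using h
  have hsplitjj : ∑ i ∈ Finset.Icc 1 j, ns i = C + ns j := by
    have h := sum_splitIcc ns j j hj1 (by omega)
    rw [h, Finset.Icc_self, Finset.sum_singleton]
  have hUj : s ≤ n - (∑ i ∈ Finset.Icc (j+1) p, ns i) + (p - j) * ns j := by
    rcases eq_or_lt_of_le hjp with heq | hlt
    · rw [heq]
      have he : Finset.Icc (p+1) p = ∅ := Finset.Icc_eq_empty (by omega)
      rw [he, Finset.sum_empty]
      omega
    · have hnP : ¬ P (j+1) := Nat.findGreatest_is_greatest (n := p) (k := j+1) (by omega) (by omega)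
      have hs' : s < n - (∑ i ∈ Finset.Icc (j+1) p, ns i) + (p - (j+1) + 1) * ns ((j+1)-1) + 1 := by
        by_contra hc
        push_neg at hc
        exact hnP ⟨by omega, hc⟩
      have e1 : p - (j+1) + 1 = p - j := by omega
      have e2 : (j+1) - 1 = j := by omega
      rw [e1, e2] at hs'
      omega
  have hts : ts s = (s - nn 0 - C - 1) / q := htsj j s hj1 hjp hLj hUj
  obtain ⟨X, hX⟩ : ∃ X, X = q * ns (j-1) := ⟨_, rfl⟩
  obtain ⟨Y, hY⟩ : ∃ Y, Y = (p - j) * ns j := ⟨_, rfl⟩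
  obtain ⟨Z, hZ⟩ : ∃ Z, Z = q * ns j := ⟨_, rfl⟩
  have hZY : Z = Y + ns j := by rw [hZ, hY, hq]; rw [Nat.succ_mul]
  have hM1 : nn 0 + C + X + 1 ≤ s := by
    rw [← hX] at hLj
    omega
  have hM2 : s ≤ nn 0 + C + Z := by
    rw [← hY] at hUj
    omega
  obtain ⟨T, hT⟩ : ∃ T, T = q * ts s := ⟨_, rfl⟩
  have hqm : T ≤ s - nn 0 - C - 1 := by
    rw [hT, hts]; exact Nat.mul_div_le _ _
  by_cases htm : ts s + 1 ≤ t
  · omega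
  push_neg at htm
  have hmlt : ts s < ns j := by
    have h6 : q * ts s < q * ns j := by omega
    exact lt_of_mul_lt_mul_left h6 (Nat.zero_le q)
  have hmono' : ∀ i, j ≤ i → i ≤ p → ns j ≤ ns i := by
    intro i
    induction i with
    | zero => intro h1 _; omega
    | succ ii ih =>
      intro h1 h2
      rcases eq_or_lt_of_le h1 with he | hl
      · rw [he]
      · exact le_trans (ih (by omega) (by omega)) (hmono ii (by omega) (by omega))
  obtain ⟨W, hW⟩ : ∃ W, W = q * t := ⟨_, rfl⟩
  have hminsum : ∑ l ∈ Finset.Icc 1 p, min (ns l) t ≤ C + W := by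
    rw [sum_splitIcc (fun l => min (ns l) t) j p hj1 (by omega)]
    have hA : ∑ l ∈ Finset.Icc 1 (j-1), min (ns l) t ≤ C := by
      apply Finset.sum_le_sum; intro l _; exact min_le_left _ _
    have hB : ∑ l ∈ Finset.Icc j p, min (ns l) t = W := by
      have he : ∀ l ∈ Finset.Icc j p, min (ns l) t = t := by
        intro l hl; simp only [Finset.mem_Icc] at hl
        have := hmono' l hl.1 hl.2; omega
      rw [Finset.sum_congr rfl he, Finset.sum_const, smul_eq_mul, Nat.card_Icc, hW]
      congr 1
      omega
    omega
  obtain ⟨F, hF⟩ : ∃ F, F = q * (ts s - t) := ⟨_, rfl⟩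
  have hAF : W + F = T := by rw [hW, hF, hT, ← Nat.mul_add]; congr 1; omega
  have hFlb : ts s - t ≤ F := by
    rw [hF]; exact Nat.le_mul_of_pos_left _ (by omega)
  omega

/-- **Corollary 5.3 / cor-3**: with block sizes `r_i ≤ min{s, n_i}` and
`1 ≤ k_i ≤ (s-1)c + b + t_s`, where `ts` satisfies the defining clauses of the
function `t_s` built from `(n_0,…,n_p)` (via the weakly increasing rearrangement
`ns` of `(n_1,…,n_p)`, with `ns 0 = 1`), at least one of the alternatives
(i), (ii), (iii) holds. -/
theorem key_corollary (p n s b c : ℕ) (hs1 : 1 ≤ s) (hsn : s ≤ n)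
    (nn : ℕ → ℕ) (hnpos : ∀ i ≤ p, 1 ≤ nn i)
    (hnsum : ∑ i ∈ Finset.range (p + 1), nn i = n)
    (r : ℕ → ℕ) (hrpos : ∀ i ≤ p, 1 ≤ r i)
    (hrsum : ∑ i ∈ Finset.range (p + 1), r i = s)
    (hrle : ∀ i ≤ p, r i ≤ min s (nn i))
    (ns : ℕ → ℕ) (hns0 : ns 0 = 1)
    (hmono : ∀ i, 1 ≤ i → i + 1 ≤ p → ns i ≤ ns (i + 1))
    (hperm : Multiset.map ns (Finset.Icc 1 p).val = Multiset.map nn (Finset.Icc 1 p).val)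
    (ts : ℕ → ℕ)
    (hts0 : ∀ s', 1 ≤ s' → s' ≤ nn 0 + p → ts s' = 0)
    (htsj : ∀ j s', 1 ≤ j → j ≤ p →
      n - (∑ i ∈ Finset.Icc j p, ns i) + (p - j + 1) * ns (j - 1) + 1 ≤ s' →
      s' ≤ n - (∑ i ∈ Finset.Icc (j + 1) p, ns i) + (p - j) * ns j →
      ts s' = (s' - nn 0 - (∑ i ∈ Finset.Icc 1 (j - 1), ns i) - 1) / (p - j + 1))
    (k : ℕ → ℕ)
    (hk : ∀ i, 1 ≤ i → i ≤ s → 1 ≤ k i ∧ k i ≤ (s - 1) * c + b + ts s) :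
    (∃ i, 1 ≤ i ∧ i ≤ s ∧ 1 ≤ k i ∧ k i ≤ b) ∨
    (∃ i j, 1 ≤ i ∧ i < j ∧ j ≤ s ∧ ¬ inSameR p r i j ∧
      -(c : ℤ) ≤ (k i : ℤ) - (k j : ℤ) ∧ (k i : ℤ) - (k j : ℤ) ≤ (c : ℤ) - 1) ∨
    (∃ i j, 1 ≤ i ∧ i < j ∧ j ≤ s ∧ inSameR p r i j ∧
      -(c : ℤ) - 1 ≤ (k i : ℤ) - (k j : ℤ) ∧ (k i : ℤ) - (k j : ℤ) ≤ (c : ℤ)) := by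
  classical
  by_contra hcon
  push_neg at hcon
  obtain ⟨h1, h2, h3⟩ := hcon
  -- the sort key
  set f : ℕ → ℕ := fun i => (s+1) * k i + (s - i) with hfdef
  have hsep : ∀ x y : ℕ, x < y → (s+1)*x + (s+1) ≤ (s+1)*y := by
    intro x y hxy
    have h := Nat.mul_le_mul_left (s+1) (show x + 1 ≤ y from hxy)
    rw [Nat.mul_add, Nat.mul_one] at h
    exact h
  -- the sorted enumeration of indices 1..s
  set g : Fin s → ℕ := fun i => f (i.val + 1) with hgdef
  set σ : Equiv.Perm (Fin s) := Tuple.sort g with hσdef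
  set v : ℕ → ℕ := fun i => if h : i < s then ((σ ⟨i, h⟩ : Fin s) : ℕ) + 1 else 0 with hvdef
  have hv_lb : ∀ i, i < s → 1 ≤ v i ∧ v i ≤ s := by
    intro i hi
    simp only [hvdef, dif_pos hi]
    have := (σ ⟨i, hi⟩).isLt
    omega
  have hv_inj : ∀ i i', i < s → i' < s → v i = v i' → i = i' := by
    intro i i' hi hi' he
    simp only [hvdef, dif_pos hi, dif_pos hi'] at he
    have h0 : σ ⟨i, hi⟩ = σ ⟨i', hi'⟩ := Fin.ext (by omega)
    have h1 := σ.injective h0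
    simpa using congrArg Fin.val h1
  have hv_mono : ∀ i i', i ≤ i' → i' < s → f (v i) ≤ f (v i') := by
    intro i i' hle hi'
    have hi : i < s := lt_of_le_of_lt hle hi'
    have h := Tuple.monotone_sort g (a := ⟨i, hi⟩) (b := ⟨i', hi'⟩) (Fin.mk_le_mk.mpr hle)
    simp only [Function.comp, hgdef] at h
    simp only [hvdef, dif_pos hi, dif_pos hi']
    exact h
  have hkeyf : ∀ a2 b2, 1 ≤ a2 → a2 ≤ s → 1 ≤ b2 → b2 ≤ s → f a2 < f b2 →
      k a2 < k b2 ∨ (k a2 = k b2 ∧ b2 < a2) := by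
    intro a2 b2 h1a h2a h1b h2b hf
    simp only [hfdef] at hf
    obtain ⟨KA, hKA⟩ : ∃ x, x = (s+1) * k a2 := ⟨_, rfl⟩
    obtain ⟨KB, hKB⟩ : ∃ x, x = (s+1) * k b2 := ⟨_, rfl⟩
    rcases lt_trichotomy (k a2) (k b2) with h | h | h
    · exact Or.inl h
    · right
      refine ⟨h, ?_⟩
      rw [h] at hf
      omega
    · exfalso
      have h' := hsep _ _ h
      rw [← hKA, ← hKB] at hf h'
      omega
  have hfinj : ∀ a2 b2, 1 ≤ a2 → a2 ≤ s → 1 ≤ b2 → b2 ≤ s → f a2 = f b2 → a2 = b2 := by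
    intro a2 b2 h1a h2a h1b h2b hfe
    simp only [hfdef] at hfe
    obtain ⟨KA, hKA⟩ : ∃ x, x = (s+1) * k a2 := ⟨_, rfl⟩
    obtain ⟨KB, hKB⟩ : ∃ x, x = (s+1) * k b2 := ⟨_, rfl⟩
    rcases lt_trichotomy (k a2) (k b2) with h | h | h
    · exfalso
      have h' := hsep _ _ h
      rw [← hKA, ← hKB] at hfe h'
      omega
    · rw [h] at hfe
      rw [← hKB] at hfe
      omega
    · exfalso
      have h' := hsep _ _ h
      rw [← hKA, ← hKB] at hfe h'
      omega
  have hfv : ∀ i, i + 1 < s → f (v i) < f (v (i+1)) := by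
    intro i hi
    obtain ⟨ha1, ha2⟩ := hv_lb i (by omega)
    obtain ⟨hb1, hb2⟩ := hv_lb (i+1) hi
    have hle := hv_mono i (i+1) (by omega) hi
    rcases lt_or_eq_of_le hle with h | h
    · exact h
    · exfalso
      have := hfinj _ _ ha1 ha2 hb1 hb2 h
      have := hv_inj i (i+1) (by omega) hi this
      omega
  have hcomm : ∀ a2 b2, inSameR p r a2 b2 → inSameR p r b2 a2 := by
    rintro a2 b2 ⟨l, hl1, hl2, hl3, hl4⟩
    exact ⟨l, hl1, hl2, hl4, hl3⟩
  -- the gap lemma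
  have hgap : ∀ i, i + 1 < s →
      k (v i) + c + (if v i < v (i+1) then 1 else 0)
        + (if inSameR p r (v i) (v (i+1)) then 1 else 0) ≤ k (v (i+1)) := by
    intro i hi
    obtain ⟨ha1, ha2⟩ := hv_lb i (by omega)
    obtain ⟨hb1, hb2⟩ := hv_lb (i+1) hi
    have hflt := hfv i hi
    have hkey := hkeyf (v i) (v (i+1)) ha1 ha2 hb1 hb2 hflt
    have hklee : k (v i) ≤ k (v (i+1)) := by rcases hkey with h | ⟨h, _⟩ <;> omega
    by_cases hsame : inSameR p r (v i) (v (i+1))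
    · rw [if_pos hsame]
      by_cases hord : v i < v (i+1)
      · rw [if_pos hord]
        have hlt : k (v i) < k (v (i+1)) := by
          rcases hkey with h | ⟨_, h⟩
          · exact h
          · omega
        rcases le_or_gt (-(c:ℤ)-1) ((k (v i) : ℤ) - (k (v (i+1)) : ℤ)) with hc1 | hc1
        · have := h3 (v i) (v (i+1)) ha1 hord hb2 hsame hc1
          omega
        · omega
      · rw [if_neg hord]
        have hord' : v (i+1) < v i := by
          rcases Nat.lt_or_ge (v (i+1)) (v i) with h | h
          · exact h
          · exfalso
            rcases Nat.lt_or_ge (v i) (v (i+1)) with h' | h'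
            · exact hord h'
            · have := hv_inj i (i+1) (by omega) hi (by omega)
              omega
        have := h3 (v (i+1)) (v i) hb1 hord' ha2 (hcomm _ _ hsame) (by omega)
        omega
    · rw [if_neg hsame]
      by_cases hord : v i < v (i+1)
      · rw [if_pos hord]
        have hlt : k (v i) < k (v (i+1)) := by
          rcases hkey with h | ⟨_, h⟩
          · exact h
          · omega
        rcases le_or_gt (-(c:ℤ)) ((k (v i) : ℤ) - (k (v (i+1)) : ℤ)) with hc1 | hc1
        · have := h2 (v i) (v (i+1)) ha1 hord hb2 hsame hc1
          omega
        · omega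
      · rw [if_neg hord]
        have hord' : v (i+1) < v i := by
          rcases Nat.lt_or_ge (v (i+1)) (v i) with h | h
          · exact h
          · exfalso
            rcases Nat.lt_or_ge (v i) (v (i+1)) with h' | h'
            · exact hord h'
            · have := hv_inj i (i+1) (by omega) hi (by omega)
              omega
        have := h2 (v (i+1)) (v i) hb1 hord' ha2 (fun hx => hsame (hcomm _ _ hx)) (by omega)
        omega
  -- telescoping
  have htel : ∀ m, m < s → k (v 0) + m * c
      + (∑ i2 ∈ Finset.range m, (if v i2 < v (i2+1) then 1 else 0))
      + (∑ i2 ∈ Finset.range m, (if inSameR p r (v i2) (v (i2+1)) then 1 else 0))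
      ≤ k (v m) := by
    intro m
    induction m with
    | zero => intro _; simp
    | succ mm ih =>
      intro hmm
      have h0 := ih (by omega)
      have hg := hgap mm hmm
      rw [Finset.sum_range_succ, Finset.sum_range_succ]
      have he : (mm+1)*c = mm*c + c := by ring
      by_cases hA : v mm < v (mm+1) <;> by_cases hB : inSameR p r (v mm) (v (mm+1)) <;>
        simp only [if_pos, if_neg, hA, hB, if_true, if_false] at hg ⊢ <;> omega
  set ascF := (Finset.range (s-1)).filter (fun i2 => v i2 < v (i2+1)) with hascF
  set adjF := (Finset.range (s-1)).filter (fun i2 => inSameR p r (v i2) (v (i2+1))) with hadjF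
  have hDc : (∑ i2 ∈ Finset.range (s-1), if v i2 < v (i2+1) then 1 else 0) = ascF.card :=
    (Finset.card_filter _ _).symm
  have hAc : (∑ i2 ∈ Finset.range (s-1), if inSameR p r (v i2) (v (i2+1)) then 1 else 0)
      = adjF.card := (Finset.card_filter _ _).symm
  have hlast := htel (s-1) (by omega)
  rw [hDc, hAc] at hlast
  obtain ⟨hv01, hv02⟩ := hv_lb 0 (by omega)
  obtain ⟨hvl1, hvl2⟩ := hv_lb (s-1) (by omega)
  have hk0 := hk (v 0) hv01 hv02
  have hkl := hk (v (s-1)) hvl1 hvl2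
  have hb0 : b < k (v 0) := h1 (v 0) hv01 hv02 hk0.1
  have hmain : ascF.card + adjF.card + 1 ≤ ts s := by omega
  -- block combinatorics
  have hblockmono : ∀ l l', l ≤ l' → blockSum r l ≤ blockSum r l' := by
    intro l l' h
    apply Finset.sum_le_sum_of_subset
    exact Finset.range_subset_range.mpr (by omega)
  have hblocktop : blockSum r p = s := hrsum
  have hBsub : ∀ l, 1 ≤ l → l ≤ p →
      ∀ x ∈ Finset.Ioc (blockSum r (l-1)) (blockSum r l), 1 ≤ x ∧ x ≤ s := by
    intro l hl1 hl2 x hx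
    simp only [Finset.mem_Ioc] at hx
    have h := hblockmono l p hl2
    rw [hblocktop] at h
    omega
  have hblocksucc : ∀ l, 1 ≤ l → blockSum r l = blockSum r (l-1) + r l := by
    intro l hl
    have e : l - 1 + 1 = l := by omega
    unfold blockSum
    rw [e, Finset.sum_range_succ]
  have hcardB : ∀ l, 1 ≤ l → (Finset.Ioc (blockSum r (l-1)) (blockSum r l)).card = r l := by
    intro l hl
    rw [Nat.card_Ioc, hblocksucc l hl]
    omega
  have himg : (Finset.range s).image v = Finset.Icc 1 s := by
    apply Finset.eq_of_subset_of_card_le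
    · intro x hx
      simp only [Finset.mem_image, Finset.mem_range] at hx
      obtain ⟨i, hi, he⟩ := hx
      obtain ⟨e1, e2⟩ := hv_lb i hi
      simp only [Finset.mem_Icc]
      omega
    · rw [Nat.card_Icc, Finset.card_image_of_injOn, Finset.card_range]
      · omega
      · intro a2 ha b2 hb he
        simp only [Finset.coe_range, Set.mem_Iio] at ha hb
        exact hv_inj a2 b2 ha hb he
  have hsurj : ∀ x, 1 ≤ x → x ≤ s → ∃ i, i < s ∧ v i = x := by
    intro x h1x h2x
    have hx : x ∈ (Finset.range s).image v := by
      rw [himg]; simp only [Finset.mem_Icc]; omega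
    simp only [Finset.mem_image, Finset.mem_range] at hx
    obtain ⟨i, hi, he⟩ := hx
    exact ⟨i, hi, he⟩
  set Al : ℕ → Finset ℕ := fun l => (Finset.range (s-1)).filter
    (fun i2 => v i2 ∈ Finset.Ioc (blockSum r (l-1)) (blockSum r l)
      ∧ v (i2+1) ∈ Finset.Ioc (blockSum r (l-1)) (blockSum r l)) with hAldef
  have hblk : ∀ l, 1 ≤ l → l ≤ p → r l ≤ (Al l).card + ascF.card + 1 := by
    intro l hl1 hl2
    set B := Finset.Ioc (blockSum r (l-1)) (blockSum r l) with hBdef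
    set St := (Finset.range s).filter (fun i2 => v i2 ∈ B ∧ (i2 = 0 ∨ v (i2-1) ∉ B)) with hStdef
    set El := (Finset.range s).filter (fun i2 => v i2 ∈ B) with hEldef
    have hcardEl : El.card = r l := by
      rw [← hcardB l hl1]
      apply Finset.card_bij (fun i2 _ => v i2)
      · intro i2 hi2
        simp only [hEldef, Finset.mem_filter] at hi2
        exact hi2.2
      · intro a2 ha b2 hb he
        simp only [hEldef, Finset.mem_filter, Finset.mem_range] at ha hb
        exact hv_inj a2 b2 ha.1 hb.1 he
      · intro x hx
        obtain ⟨e1, e2⟩ := hBsub l hl1 hl2 x hx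
        obtain ⟨i, hi, he⟩ := hsurj x e1 e2
        refine ⟨i, ?_, he⟩
        simp only [hEldef, Finset.mem_filter, Finset.mem_range]
        exact ⟨hi, by rw [he]; exact hx⟩
    have hsub : El ⊆ ((Al l).image (· + 1)) ∪ St := by
      intro i2 hi2
      simp only [hEldef, Finset.mem_filter, Finset.mem_range] at hi2
      obtain ⟨his, hiB⟩ := hi2
      by_cases hst : i2 = 0 ∨ v (i2-1) ∉ B
      · apply Finset.mem_union_right
        simp only [hStdef, Finset.mem_filter, Finset.mem_range]
        exact ⟨his, hiB, hst⟩
      · push_neg at hst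
        obtain ⟨hne0, hprev⟩ := hst
        apply Finset.mem_union_left
        apply Finset.mem_image.mpr
        refine ⟨i2 - 1, ?_, by omega⟩
        simp only [hAldef, Finset.mem_filter, Finset.mem_range]
        have e : i2 - 1 + 1 = i2 := by omega
        rw [e]
        refine ⟨by omega, hprev, hiB⟩
    have hcount : r l ≤ (Al l).card + St.card := by
      calc r l = El.card := hcardEl.symm
        _ ≤ (((Al l).image (· + 1)) ∪ St).card := Finset.card_le_card hsub
        _ ≤ ((Al l).image (· + 1)).card + St.card := Finset.card_union_le _ _
        _ ≤ (Al l).card + St.card := by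
            have := Finset.card_image_le (s := Al l) (f := (· + 1))
            omega
    have hStcard : St.card ≤ ascF.card + 1 := by
      set ψ : ℕ → WithBot ℕ :=
        fun i2 => ((Finset.range i2).filter (fun m => v m < v (m+1))).max with hψdef
      have hmaps : ∀ i2 ∈ St, ψ i2 ∈
          insert (⊥ : WithBot ℕ) (Finset.image (fun m : ℕ => WithBot.some m) ascF) := by
        intro i2 hi2
        simp only [hStdef, Finset.mem_filter, Finset.mem_range] at hi2
        simp only [hψdef]
        rcases h : ((Finset.range i2).filter (fun m => v m < v (m+1))).max with _ | m
        · exact Finset.mem_insert_self _ _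
        · have hm := Finset.mem_of_max h
          simp only [Finset.mem_filter, Finset.mem_range] at hm
          apply Finset.mem_insert_of_mem
          have hmm2 : m ∈ ascF := by
            simp only [hascF, Finset.mem_filter, Finset.mem_range]
            exact ⟨by omega, hm.2⟩
          exact Finset.mem_image.mpr ⟨m, hmm2, rfl⟩
      have hinj : Set.InjOn ψ St := by
        have haux : ∀ i1 i2, i1 ∈ St → i2 ∈ St → i1 < i2 → ψ i1 = ψ i2 → False := by
          intro i1 i2 hi1 hi2 hlt heq
          simp only [hStdef, Finset.mem_filter, Finset.mem_range] at hi1 hi2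
          have hno : ∀ m, i1 ≤ m → m < i2 → ¬ (v m < v (m+1)) := by
            intro m hm1 hm2 hasc
            have hmem : m ∈ (Finset.range i2).filter (fun m => v m < v (m+1)) := by
              simp only [Finset.mem_filter, Finset.mem_range]
              exact ⟨hm2, hasc⟩
            have hle : (m : WithBot ℕ) ≤ ψ i2 := Finset.le_max hmem
            rw [← heq] at hle
            have hle' : (m : WithBot ℕ) ≤ ((Finset.range i1).filter (fun m => v m < v (m+1))).max := hle
            rcases h1' : ((Finset.range i1).filter (fun m => v m < v (m+1))).max with _ | m'
            · rw [h1'] at hle'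
              exact (WithBot.not_coe_le_bot m hle').elim
            · rw [h1'] at hle'
              have hle : (m : WithBot ℕ) ≤ (m' : WithBot ℕ) := hle'
              have hm' := Finset.mem_of_max h1'
              simp only [Finset.mem_filter, Finset.mem_range] at hm'
              have : m ≤ m' := by exact_mod_cast hle
              omega
          have hdesc : ∀ m, i1 ≤ m → m < i2 → v (m+1) < v m := by
            intro m hm1 hm2
            have hns : v (m+1) ≠ v m := fun he => by
              have := hv_inj (m+1) m (by omega) (by omega) he
              omega
            have := hno m hm1 hm2
            omega
          have hchain : ∀ m, i1 ≤ m → m < i2 → v m ≤ v i1 := by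
            intro m
            induction m with
            | zero =>
              intro hz _
              have h0 : i1 = 0 := by omega
              rw [h0]
            | succ mm ih =>
              intro hz1 hz2
              rcases eq_or_lt_of_le hz1 with he | hl
              · rw [← he]
              · have hmm : i1 ≤ mm := by omega
                exact le_trans (le_of_lt (hdesc mm hmm (by omega))) (ih hmm (by omega))
          obtain ⟨hi2s, hv2B, hi2st⟩ := hi2
          have hi2pos : 1 ≤ i2 := by omega
          have hnotB : v (i2 - 1) ∉ B := by
            rcases hi2st with h | h
            · omega
            · exact h
          apply hnotB
          have hd := hdesc (i2-1) (by omega) (by omega)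
          rw [show i2 - 1 + 1 = i2 by omega] at hd
          have hc2 := hchain (i2-1) (by omega) (by omega)
          obtain ⟨_, hv1B, _⟩ := hi1
          simp only [hBdef, Finset.mem_Ioc] at hv1B hv2B ⊢
          omega
        intro i1 hi1 i2 hi2 heq
        rcases lt_trichotomy i1 i2 with h | h | h
        · exact absurd heq (fun he => haux i1 i2 (Finset.mem_coe.mp hi1) (Finset.mem_coe.mp hi2) h he)
        · exact h
        · exact absurd heq.symm (fun he => haux i2 i1 (Finset.mem_coe.mp hi2) (Finset.mem_coe.mp hi1) h he)
      calc St.card ≤ (insert (⊥ : WithBot ℕ) (Finset.image (fun m : ℕ => WithBot.some m) ascF)).card :=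
            Finset.card_le_card_of_injOn ψ hmaps hinj
        _ ≤ (Finset.image (fun m : ℕ => WithBot.some m) ascF).card + 1 := Finset.card_insert_le _ _
        _ ≤ ascF.card + 1 := Nat.add_le_add_right Finset.card_image_le 1
    omega
  -- sum over blocks
  have hsum2 : ∑ l ∈ Finset.Icc 1 p, (Al l).card ≤ adjF.card := by
    rw [← Finset.card_biUnion]
    · apply Finset.card_le_card
      intro i2 hi2
      simp only [Finset.mem_biUnion] at hi2
      obtain ⟨l, hl, hmem⟩ := hi2
      simp only [Finset.mem_Icc] at hl
      simp only [hAldef, Finset.mem_filter, Finset.mem_range] at hmem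
      simp only [hadjF, Finset.mem_filter, Finset.mem_range]
      exact ⟨hmem.1, ⟨l, hl.1, hl.2, hmem.2.1, hmem.2.2⟩⟩
    · intro l1 hl1 l2 hl2 hne
      simp only [Finset.mem_coe, Finset.mem_Icc] at hl1 hl2
      apply Finset.disjoint_left.mpr
      intro i2 hi2 hi2'
      simp only [hAldef, Finset.mem_filter, Finset.mem_range, Finset.mem_Ioc] at hi2 hi2'
      have hkey2 : ∀ la lb : ℕ, la < lb →
          v i2 ≤ blockSum r la → blockSum r (lb-1) < v i2 → False := by
        intro la lb hab hu hv2
        have := hblockmono la (lb-1) (by omega)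
        omega
      rcases lt_or_gt_of_ne hne with h | h
      · exact hkey2 l1 l2 h hi2.2.1.2 hi2'.2.1.1
      · exact hkey2 l2 l1 h hi2'.2.1.2 hi2.2.1.1
  have harith := arith_main p n s hs1 hsn nn hnpos hnsum r hrsum hrle ns hns0 hmono hperm
    ts hts0 htsj (ascF.card + 1) (by omega)
  have hsum1 : ∑ l ∈ Finset.Icc 1 p, (r l - (ascF.card + 1))
      ≤ ∑ l ∈ Finset.Icc 1 p, (Al l).card := by
    apply Finset.sum_le_sum
    intro l hl
    simp only [Finset.mem_Icc] at hl
    have := hblk l hl.1 hl.2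
    omega
  omega



end
end

section
/- Let p ≥ 1 and let n_0,…,n_p be positive integers with n_0 + ⋯ + n_p = n, and let t_s (1 ≤ s ≤ n) be defined from (n_0,…,n_p) as in the context. Then for every s with 1 ≤ s ≤ n, −p(t_s + 1) ≤ n_0 − s; equivalently, s − n_0 ≤ p(t_s + 1). -/
open Finset

noncomputable section

/-- **The final lemma** (Lemma 6.3): for the function `t_s` built from the composition
`(n_0,…,n_p)` (via the weakly increasing rearrangement `ns` of `(n_1,…,n_p)` with
`ns 0 = 1`), one has `-p(t_s + 1) ≤ n_0 - s`, i.e. `s - n_0 ≤ p(t_s + 1)`,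
for every `1 ≤ s ≤ n`. -/
theorem ts_lower_estimate (p n : ℕ) (hp : 1 ≤ p)
    (nn : ℕ → ℕ) (hnpos : ∀ i ≤ p, 1 ≤ nn i)
    (hnsum : ∑ i ∈ Finset.range (p + 1), nn i = n)
    (ns : ℕ → ℕ) (hns0 : ns 0 = 1)
    (hmono : ∀ i, 1 ≤ i → i + 1 ≤ p → ns i ≤ ns (i + 1))
    (hperm : Multiset.map ns (Finset.Icc 1 p).val = Multiset.map nn (Finset.Icc 1 p).val)
    (ts : ℕ → ℕ)
    (hts0 : ∀ s, 1 ≤ s → s ≤ nn 0 + p → ts s = 0)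
    (htsj : ∀ j s, 1 ≤ j → j ≤ p →
      n - (∑ i ∈ Finset.Icc j p, ns i) + (p - j + 1) * ns (j - 1) + 1 ≤ s →
      s ≤ n - (∑ i ∈ Finset.Icc (j + 1) p, ns i) + (p - j) * ns j →
      ts s = (s - nn 0 - (∑ i ∈ Finset.Icc 1 (j - 1), ns i) - 1) / (p - j + 1)) :
    ∀ s, 1 ≤ s → s ≤ n → (s : ℤ) - (nn 0 : ℤ) ≤ (p : ℤ) * ((ts s : ℤ) + 1) := by
  have hmono' : ∀ a b, 1 ≤ a → a ≤ b → b ≤ p → ns a ≤ ns b := by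
    intro a b ha hab hbp
    induction b with
    | zero => omega
    | succ k ih =>
      rcases Nat.lt_or_ge a (k + 1) with h | h
      · exact le_trans (ih (by omega) (by omega)) (hmono k (by omega) (by omega))
      · have : a = k + 1 := by omega
        subst this; exact le_refl _
  have hsum_eq : ∑ i ∈ Finset.Icc 1 p, ns i = ∑ i ∈ Finset.Icc 1 p, nn i := by
    show (Multiset.map ns (Finset.Icc 1 p).val).sum = (Multiset.map nn (Finset.Icc 1 p).val).sum
    rw [hperm]
  have hn' : nn 0 + ∑ i ∈ Finset.Icc 1 p, nn i = n := by
    rw [← hnsum, Finset.range_eq_Ico,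
      ← Finset.sum_Ico_consecutive nn (Nat.zero_le 1) (by omega : 1 ≤ p + 1),
      Finset.Ico_add_one_right_eq_Icc]
    congr 1
  intro s hs1 hsn
  by_cases hsmall : s ≤ nn 0 + p
  · rw [hts0 s hs1 hsmall]; push_cast; omega
  · push_neg at hsmall
    have key : ∀ j, 1 ≤ j → j ≤ p →
        s ≤ n - (∑ i ∈ Finset.Icc (j + 1) p, ns i) + (p - j) * ns j →
        (s : ℤ) - (nn 0 : ℤ) ≤ (p : ℤ) * ((ts s : ℤ) + 1) := by
      intro j
      induction j using Nat.strong_induction_on with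
      | _ j ih =>
        intro hj1 hjp hub
        have hsplit : (∑ i ∈ Finset.Icc 1 (j - 1), ns i) + (∑ i ∈ Finset.Icc j p, ns i)
            = ∑ i ∈ Finset.Icc 1 p, ns i := by
          rw [← Finset.Ico_add_one_right_eq_Icc 1 (j - 1), ← Finset.Ico_add_one_right_eq_Icc j p,
            ← Finset.Ico_add_one_right_eq_Icc 1 p, show j - 1 + 1 = j from by omega]
          exact Finset.sum_Ico_consecutive _ (by omega) (by omega)
        by_cases hL : n - (∑ i ∈ Finset.Icc j p, ns i) + (p - j + 1) * ns (j - 1) + 1 ≤ s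
        · rw [htsj j s hj1 hjp hL hub]
          have hNS : n - (∑ i ∈ Finset.Icc j p, ns i)
              = nn 0 + ∑ i ∈ Finset.Icc 1 (j - 1), ns i := by omega
          rw [hNS] at hL
          set A := ∑ i ∈ Finset.Icc 1 (j - 1), ns i with hA
          clear_value A
          have f4 : A ≤ (j - 1) * ns (j - 1) := by
            calc A ≤ ∑ i ∈ Finset.Icc 1 (j - 1), ns (j - 1) := by
                  rw [hA]
                  apply Finset.sum_le_sum
                  intro i hi
                  simp only [Finset.mem_Icc] at hi
                  exact hmono' i (j - 1) hi.1 hi.2 (by omega)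
              _ = (j - 1) * ns (j - 1) := by
                  rw [Finset.sum_const, smul_eq_mul, Nat.card_Icc, Nat.add_sub_cancel]
          set q := p - j + 1 with hq
          clear_value q
          set m := s - nn 0 - A - 1 with hm
          clear_value m
          set t := m / q with ht
          have hq0 : 0 < q := by omega
          have f3 : ns (j - 1) ≤ t := by
            rw [ht, Nat.le_div_iff_mul_le hq0]
            calc ns (j - 1) * q = q * ns (j - 1) := mul_comm _ _
              _ ≤ m := by omega
          clear_value t
          have f1 : q * t + m % q = m := by rw [ht]; exact Nat.div_add_mod m q
          have f2 : m % q < q := Nat.mod_lt _ hq0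
          -- move to ℤ
          have hs5 : (s : ℤ) = (nn 0 : ℤ) + A + 1 + m := by omega
          have hpq : (p : ℤ) = (q : ℤ) + (j : ℤ) - 1 := by omega
          have hexp : (p : ℤ) * ((t : ℤ) + 1)
              = (q : ℤ) * t + q + ((j : ℤ) - 1) * t + ((j : ℤ) - 1) := by rw [hpq]; ring
          have hj1' : (1 : ℤ) ≤ (j : ℤ) := by exact_mod_cast hj1
          have f3' : ((ns (j - 1) : ℕ) : ℤ) ≤ (t : ℤ) := by exact_mod_cast f3
          have hmul : ((j : ℤ) - 1) * (ns (j - 1) : ℤ) ≤ ((j : ℤ) - 1) * (t : ℤ) :=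
            mul_le_mul_of_nonneg_left f3' (by omega)
          have f4' : (A : ℤ) ≤ ((j : ℤ) - 1) * (ns (j - 1) : ℤ) := by
            calc (A : ℤ) ≤ (((j - 1) * ns (j - 1) : ℕ) : ℤ) := by exact_mod_cast f4
              _ = ((j : ℤ) - 1) * (ns (j - 1) : ℤ) := by
                  push_cast [Nat.cast_sub hj1]; ring
          have f1' : (q : ℤ) * t + ((m % q : ℕ) : ℤ) = (m : ℤ) := by exact_mod_cast f1
          have f2' : ((m % q : ℕ) : ℤ) < (q : ℤ) := by exact_mod_cast f2
          linarith [hmul, f4', hexp, f1', f2', hs5]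
        · push_neg at hL
          rcases Nat.eq_or_lt_of_le hj1 with hj | hj
          · exfalso
            have hNS : n - (∑ i ∈ Finset.Icc j p, ns i) = nn 0 := by
              have : j = 1 := hj.symm
              subst this
              simp only [Nat.sub_self] at hsplit ⊢
              have : ∑ i ∈ Finset.Icc 1 0, ns i = 0 := by simp
              omega
            rw [hNS, show j - 1 = 0 from by omega, hns0, mul_one] at hL
            omega
          · apply ih (j - 1) (by omega) (by omega) (by omega)
            rw [show j - 1 + 1 = j from by omega, show p - (j - 1) = p - j + 1 from by omega]
            omega
    apply key p hp le_rfl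
    rw [show Finset.Icc (p + 1) p = ∅ from Finset.Icc_eq_empty (by omega)]
    simpa using hsn

end
end

section
/- (Dyson's identity.) Let a_1,…,a_n be nonnegative integers. Then the constant term (coefficient of x_1^0⋯x_n^0) of the Laurent polynomial ∏_{1≤i≠j≤n} (1 − x_i/x_j)^{a_i} over ℚ equals the multinomial coefficient (a_1+⋯+a_n)! / (a_1!⋯a_n!). -/
open Finset

noncomputable section

/-- Laurent polynomials in the variables `x_0, x_1, x_2, …` over `ℚ`. -/
abbrev LQ : Type := AddMonoidAlgebra ℚ (ℕ →₀ ℤ)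

/-- The monomial `x_i ^ z` for `z : ℤ`. -/
def XzQ (i : ℕ) (z : ℤ) : LQ := AddMonoidAlgebra.single (Finsupp.single i z) 1

/-- The constant term: the coefficient of `x_1^0 ⋯ x_n^0`. -/
def CTQ (f : LQ) : ℚ := f.coeff 0

/-! ### Auxiliary lemmas -/

instance : IsDomain LQ := NoZeroDivisors.to_isDomain _

lemma XzQ_mul_inv (i : ℕ) : XzQ i 1 * XzQ i (-1) = 1 := by
  rw [XzQ, XzQ, AddMonoidAlgebra.single_mul_single]
  norm_num
  rfl

lemma one_def' : (1 : LQ) = AddMonoidAlgebra.single 0 1 := rfl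

lemma CTQ_one : CTQ (1 : LQ) = 1 := by
  rw [CTQ, one_def']
  exact Finsupp.single_eq_same

lemma single_ne_single {μ ν : ℕ →₀ ℤ} (h : μ ≠ ν) :
    (AddMonoidAlgebra.single μ (1:ℚ) : LQ) ≠ AddMonoidAlgebra.single ν 1 := by
  intro hc
  rcases AddMonoidAlgebra.single_inj.mp hc with ⟨h1, _⟩ | ⟨h1, _⟩
  · exact h h1
  · exact one_ne_zero h1

lemma pair_ne_zero {i j : ℕ} (h : i ≠ j) :
    (Finsupp.single i 1 + Finsupp.single j (-1) : ℕ →₀ ℤ) ≠ 0 := by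
  intro h0
  have := DFunLike.congr_fun h0 i
  simp [Finsupp.single_apply, h, (Ne.symm h)] at this

lemma F_ne_zero {i j : ℕ} (h : i ≠ j) : (1 - XzQ i 1 * XzQ j (-1)) ≠ 0 := by
  rw [sub_ne_zero, XzQ, XzQ, AddMonoidAlgebra.single_mul_single, one_mul, one_def']
  exact fun hc => (single_ne_single (pair_ne_zero h)) hc.symm

lemma X_ne {i j : ℕ} (h : i ≠ j) : XzQ i 1 ≠ XzQ j 1 := by
  apply single_ne_single
  intro h0
  have := DFunLike.congr_fun h0 i
  simp [Finsupp.single_apply, Ne.symm h] at this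

lemma XzQ_ne_zero (i : ℕ) (z : ℤ) : XzQ i z ≠ 0 := by
  rw [XzQ]
  intro hc
  exact one_ne_zero (AddMonoidAlgebra.single_eq_zero.mp hc)

/-- Partial-fractions / Lagrange interpolation identity in a field. -/
lemma pf_field {K : Type*} [Field K] (s : Finset ℕ) (hs : s.Nonempty) (v : ℕ → K)
    (hinj : Set.InjOn v s) (hnz : ∀ j ∈ s, v j ≠ 0) :
    ∑ k ∈ s, ∏ m ∈ s.erase k, (∏ j ∈ s.erase m, (1 - v m / v j)) =
      ∏ m ∈ s, (∏ j ∈ s.erase m, (1 - v m / v j)) := by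
  classical
  set q : ℕ → K := fun m => ∏ j ∈ s.erase m, (1 - v m / v j) with hq
  have hfac : ∀ m ∈ s, ∀ j ∈ s.erase m, (1 - v m / v j) ≠ 0 := by
    intro m hm j hj
    rw [mem_erase] at hj
    have hvj := hnz j hj.2
    have hvne : v m ≠ v j := fun hc => hj.1 (hinj hj.2 hm hc.symm)
    intro hc
    rw [sub_eq_zero, eq_comm, div_eq_one_iff_eq hvj] at hc
    exact hvne hc
  have hqz : ∀ m ∈ s, q m ≠ 0 := fun m hm => prod_ne_zero_iff.mpr (hfac m hm)
  have hL := Lagrange.sum_basis (v := v) hinj hs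
  have hL0 := congrArg (Polynomial.eval (0 : K)) hL
  rw [Polynomial.eval_finset_sum, Polynomial.eval_one] at hL0
  have hterm : ∀ k ∈ s, Polynomial.eval 0 (Lagrange.basis s v k) = (q k)⁻¹ := by
    intro k hk
    rw [Lagrange.basis, Polynomial.eval_prod, hq]
    rw [← prod_inv_distrib]
    apply prod_congr rfl
    intro j hj
    rw [mem_erase] at hj
    have hvj := hnz j hj.2
    have hvne : v k ≠ v j := fun hc => hj.1 (hinj hj.2 hk hc.symm)
    rw [Lagrange.basisDivisor, Polynomial.eval_mul, Polynomial.eval_C,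
      Polynomial.eval_sub, Polynomial.eval_X, Polynomial.eval_C]
    have h1 : v k - v j ≠ 0 := sub_ne_zero.mpr hvne
    apply eq_inv_of_mul_eq_one_left
    field_simp
    ring
  rw [Finset.sum_congr rfl hterm] at hL0
  have : ∀ k ∈ s, (∏ m ∈ s, q m) * (q k)⁻¹ = ∏ m ∈ s.erase k, q m := by
    intro k hk
    rw [← Finset.mul_prod_erase s q hk, mul_comm (q k), mul_assoc,
      mul_inv_cancel₀ (hqz k hk), mul_one]
  calc ∑ k ∈ s, ∏ m ∈ s.erase k, q m = ∑ k ∈ s, (∏ m ∈ s, q m) * (q k)⁻¹ := by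
        exact (Finset.sum_congr rfl this).symm
    _ = (∏ m ∈ s, q m) * ∑ k ∈ s, (q k)⁻¹ := by rw [Finset.mul_sum]
    _ = ∏ m ∈ s, q m := by rw [hL0, mul_one]

/-- Key Lagrange identity in `LQ`. -/
lemma key_identity (s : Finset ℕ) (hs : s.Nonempty) :
    ∑ k ∈ s, ∏ m ∈ s.erase k, (∏ j ∈ s.erase m, (1 - XzQ m 1 * XzQ j (-1))) =
      ∏ m ∈ s, (∏ j ∈ s.erase m, (1 - XzQ m 1 * XzQ j (-1))) := by
  classical
  set K := FractionRing LQ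
  set φ := algebraMap LQ K with hφ
  have hinj : Function.Injective φ := IsFractionRing.injective _ _
  apply hinj
  set v : ℕ → K := fun i => φ (XzQ i 1) with hv
  have hvnz : ∀ j, v j ≠ 0 := by
    intro j hc
    exact XzQ_ne_zero j 1 (hinj (by rw [map_zero]; exact hc))
  have hvinj : Set.InjOn v ↑s := by
    intro i _ j _ h
    by_contra hne
    exact X_ne hne (hinj h)
  have hFmap : ∀ m j : ℕ, φ (1 - XzQ m 1 * XzQ j (-1)) = 1 - v m / v j := by
    intro m j
    have hXinv : φ (XzQ j (-1)) = (v j)⁻¹ := by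
      apply eq_inv_of_mul_eq_one_left
      rw [hv, ← map_mul, mul_comm, XzQ_mul_inv, map_one]
    rw [map_sub, map_one, map_mul, hXinv, div_eq_mul_inv]
  rw [map_sum, map_prod]
  rw [Finset.sum_congr rfl (fun k _ => map_prod φ _ _)]
  have hQmap : ∀ m : ℕ, φ (∏ j ∈ s.erase m, (1 - XzQ m 1 * XzQ j (-1)))
      = ∏ j ∈ s.erase m, (1 - v m / v j) := by
    intro m
    rw [map_prod]
    exact Finset.prod_congr rfl (fun j _ => hFmap m j)
  calc ∑ k ∈ s, ∏ m ∈ s.erase k, φ (∏ j ∈ s.erase m, (1 - XzQ m 1 * XzQ j (-1)))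
      = ∑ k ∈ s, ∏ m ∈ s.erase k, ∏ j ∈ s.erase m, (1 - v m / v j) := by
        exact Finset.sum_congr rfl fun k _ => Finset.prod_congr rfl fun m _ => hQmap m
    _ = ∏ m ∈ s, ∏ j ∈ s.erase m, (1 - v m / v j) :=
        pf_field s hs v hvinj (fun j _ => hvnz j)
    _ = ∏ m ∈ s, φ (∏ j ∈ s.erase m, (1 - XzQ m 1 * XzQ j (-1))) :=
        (Finset.prod_congr rfl fun m _ => hQmap m).symm

/-! ### Constant-term extraction machinery -/

lemma mul_apply_zero_eq (f g : LQ)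
    (h : ∀ α ∈ f.coeff.support, ∀ β ∈ g.coeff.support, α + β = 0 → α = 0) :
    (f * g).coeff 0 = f.coeff 0 * g.coeff 0 := by
  classical
  rw [AddMonoidAlgebra.mul_apply]
  rw [Finsupp.sum]
  rw [Finset.sum_eq_single (0 : ℕ →₀ ℤ)]
  · rw [Finsupp.sum, Finset.sum_eq_single (0 : ℕ →₀ ℤ)]
    · simp
    · intro β hβ hβne
      rw [if_neg]
      intro hc
      exact hβne (by simpa using hc)
    · intro h0
      rw [Finsupp.notMem_support_iff.mp h0]
      simp
  · intro α hα hαne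
    rw [Finsupp.sum]
    apply Finset.sum_eq_zero
    intro β hβ
    rw [if_neg]
    intro hc
    exact hαne (h α hα β hβ hc)
  · intro h0
    rw [Finsupp.notMem_support_iff.mp h0]
    simp

def zeroAt (k : ℕ) (f : LQ) : Prop := ∀ μ ∈ f.coeff.support, μ k = 0

def Wk (k : ℕ) (f : LQ) : Prop :=
  f.coeff 0 = 1 ∧ ∀ μ ∈ f.coeff.support, μ k ≤ 0 ∧ (μ k = 0 → μ = 0)

lemma zeroAt_one (k : ℕ) : zeroAt k 1 := by
  intro μ hμ
  have : (1 : LQ) = AddMonoidAlgebra.single 0 1 := rfl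
  rw [this] at hμ
  have := Finsupp.support_single_subset hμ
  simp only [Finset.mem_singleton] at this
  rw [this]
  rfl

lemma zeroAt_mul {k : ℕ} {f g : LQ} (hf : zeroAt k f) (hg : zeroAt k g) :
    zeroAt k (f * g) := by
  classical
  intro μ hμ
  obtain ⟨α, hα, β, hβ, rfl⟩ := Finset.mem_add.mp (AddMonoidAlgebra.support_coeff_mul_subset f g hμ)
  rw [Finsupp.add_apply, hf α hα, hg β hβ, add_zero]

lemma zeroAt_pow {k : ℕ} {f : LQ} (hf : zeroAt k f) (n : ℕ) : zeroAt k (f ^ n) := by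
  induction n with
  | zero => simpa using zeroAt_one k
  | succ n ih => rw [pow_succ]; exact zeroAt_mul ih hf

lemma zeroAt_prod {k : ℕ} {ι : Type*} {s : Finset ι} {f : ι → LQ}
    (hf : ∀ i ∈ s, zeroAt k (f i)) : zeroAt k (∏ i ∈ s, f i) :=
  Finset.prod_induction f (zeroAt k) (fun _ _ => zeroAt_mul) (zeroAt_one k) hf

lemma F_support {i j : ℕ} :
    (1 - XzQ i 1 * XzQ j (-1)).coeff.support ⊆
      {0, Finsupp.single i 1 + Finsupp.single j (-1)} := by
  classical
  have h1 : (1 : LQ) = AddMonoidAlgebra.single 0 1 := rfl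
  rw [h1, XzQ, XzQ, AddMonoidAlgebra.single_mul_single, one_mul, sub_eq_add_neg,
    AddMonoidAlgebra.coeff_add, AddMonoidAlgebra.coeff_neg]
  refine (Finsupp.support_add).trans ?_
  intro μ hμ
  simp only [Finset.mem_union] at hμ
  rcases hμ with hμ | hμ
  · have := Finsupp.support_single_subset hμ
    simp only [Finset.mem_singleton] at this
    simp [this]
  · rw [Finsupp.support_neg] at hμ
    have := Finsupp.support_single_subset hμ
    simp only [Finset.mem_singleton] at this
    simp [this]

lemma zeroAt_F {k i j : ℕ} (hi : i ≠ k) (hj : j ≠ k) :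
    zeroAt k (1 - XzQ i 1 * XzQ j (-1)) := by
  intro μ hμ
  rcases Finset.mem_insert.mp (F_support hμ) with rfl | h
  · rfl
  · rw [Finset.mem_singleton] at h
    rw [h, Finsupp.add_apply, Finsupp.single_apply, Finsupp.single_apply,
      if_neg hi, if_neg hj, add_zero]

lemma F_apply_zero {i j : ℕ} (h : i ≠ j) :
    (1 - XzQ i 1 * XzQ j (-1)).coeff 0 = 1 := by
  classical
  have h1 : (1 : LQ) = AddMonoidAlgebra.single 0 1 := rfl
  have hμ : (Finsupp.single i 1 + Finsupp.single j (-1) : ℕ →₀ ℤ) ≠ 0 :=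
    pair_ne_zero h
  rw [h1, XzQ, XzQ, AddMonoidAlgebra.single_mul_single, one_mul, AddMonoidAlgebra.coeff_sub,
    Finsupp.sub_apply, AddMonoidAlgebra.coeff_single, AddMonoidAlgebra.coeff_single]
  rw [Finsupp.single_eq_same, Finsupp.single_eq_of_ne hμ.symm, sub_zero]

lemma Wk_one (k : ℕ) : Wk k 1 := by
  constructor
  · exact Finsupp.single_eq_same
  · intro μ hμ
    have : (1 : LQ) = AddMonoidAlgebra.single 0 1 := rfl
    rw [this] at hμ
    have := Finsupp.support_single_subset hμ
    simp only [Finset.mem_singleton] at this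
    subst this
    exact ⟨le_refl _, fun _ => rfl⟩

lemma Wk_mul {k : ℕ} {f g : LQ} (hf : Wk k f) (hg : Wk k g) : Wk k (f * g) := by
  classical
  constructor
  · rw [mul_apply_zero_eq f g, hf.1, hg.1, mul_one]
    intro α hα β hβ hab
    have h1 := (hf.2 α hα).1
    have h2 := (hg.2 β hβ).1
    have : α k + β k = 0 := by
      have := DFunLike.congr_fun hab k
      simpa using this
    exact (hf.2 α hα).2 (by omega)
  · intro μ hμ
    obtain ⟨α, hα, β, hβ, rfl⟩ := Finset.mem_add.mp (AddMonoidAlgebra.support_coeff_mul_subset f g hμ)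
    have h1 := hf.2 α hα
    have h2 := hg.2 β hβ
    refine ⟨?_, ?_⟩
    · rw [Finsupp.add_apply]; omega
    · rw [Finsupp.add_apply]
      intro h0
      rw [h1.2 (by omega), h2.2 (by omega), add_zero]

lemma Wk_F {k i : ℕ} (hi : i ≠ k) : Wk k (1 - XzQ i 1 * XzQ k (-1)) := by
  constructor
  · exact F_apply_zero hi
  · intro μ hμ
    rcases Finset.mem_insert.mp (F_support hμ) with rfl | h
    · exact ⟨le_refl _, fun _ => rfl⟩
    · rw [Finset.mem_singleton] at h
      subst h
      have hv : (Finsupp.single i 1 + Finsupp.single k (-1) : ℕ →₀ ℤ) k = -1 := by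
        rw [Finsupp.add_apply, Finsupp.single_apply, Finsupp.single_apply,
          if_neg hi, if_pos rfl, zero_add]
      rw [hv]
      exact ⟨by omega, by omega⟩

lemma Wk_pow {k : ℕ} {f : LQ} (hf : Wk k f) (n : ℕ) : Wk k (f ^ n) := by
  induction n with
  | zero => simpa using Wk_one k
  | succ n ih => rw [pow_succ]; exact Wk_mul ih hf

lemma Wk_prod {k : ℕ} {ι : Type*} {s : Finset ι} {f : ι → LQ}
    (hf : ∀ i ∈ s, Wk k (f i)) : Wk k (∏ i ∈ s, f i) :=
  Finset.prod_induction f (Wk k) (fun _ _ => Wk_mul) (Wk_one k) hf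

lemma CTQ_mul_eliminate {k : ℕ} {g h : LQ} (hg : zeroAt k g) (hh : Wk k h) :
    CTQ (g * h) = CTQ g := by
  rw [CTQ, CTQ, mul_apply_zero_eq g h, hh.1, mul_one]
  intro α hα β hβ hab
  have h1 := hg α hα
  have h2 := (hh.2 β hβ).1
  have h3 : α k + β k = 0 := by
    have := DFunLike.congr_fun hab k
    simpa using this
  have hβ0 : β = 0 := (hh.2 β hβ).2 (by omega)
  subst hβ0
  simpa using hab

lemma CTQ_sum {ι : Type*} (S : Finset ι) (f : ι → LQ) :
    CTQ (∑ i ∈ S, f i) = ∑ i ∈ S, CTQ (f i) :=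
  by simp only [CTQ, AddMonoidAlgebra.coeff_sum, Finsupp.finset_sum_apply]

lemma erase_erase_comm (s : Finset ℕ) (i k : ℕ) :
    (s.erase i).erase k = (s.erase k).erase i := by
  ext x
  simp only [Finset.mem_erase]
  tauto

/-! ### The main induction -/

lemma dyson_general : ∀ (N : ℕ) (s : Finset ℕ) (a : ℕ → ℕ),
    (∑ i ∈ s, a i) + s.card ≤ N →
    CTQ (∏ i ∈ s, (∏ j ∈ s.erase i, (1 - XzQ i 1 * XzQ j (-1))) ^ a i) =
      ((∑ i ∈ s, a i).factorial : ℚ) / ∏ i ∈ s, ((a i).factorial : ℚ) := by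
  intro N
  induction N with
  | zero =>
    intro s a h
    have hcard : s.card = 0 := by omega
    have hs : s = ∅ := Finset.card_eq_zero.mp hcard
    subst hs
    simp [CTQ_one]
  | succ N ih =>
    intro s a hN
    classical
    rcases Finset.eq_empty_or_nonempty s with rfl | hs
    · simp [CTQ_one]
    by_cases hzero : ∃ k ∈ s, a k = 0
    · -- boundary case: eliminate variable k
      obtain ⟨k, hk, hak⟩ := hzero
      have hsplit :
          ∏ i ∈ s, (∏ j ∈ s.erase i, (1 - XzQ i 1 * XzQ j (-1))) ^ a i =
          (∏ i ∈ s.erase k,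
              (∏ j ∈ (s.erase k).erase i, (1 - XzQ i 1 * XzQ j (-1))) ^ a i) *
            ∏ i ∈ s.erase k, (1 - XzQ i 1 * XzQ k (-1)) ^ a i := by
        rw [← Finset.mul_prod_erase s
          (fun i => (∏ j ∈ s.erase i, (1 - XzQ i 1 * XzQ j (-1))) ^ a i) hk]
        rw [hak, pow_zero, one_mul, ← Finset.prod_mul_distrib]
        apply Finset.prod_congr rfl
        intro i hi
        rw [Finset.mem_erase] at hi
        have hk' : k ∈ s.erase i := Finset.mem_erase.mpr ⟨fun hc => hi.1 hc.symm, hk⟩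
        rw [← Finset.mul_prod_erase (s.erase i)
          (fun j => (1 - XzQ i 1 * XzQ j (-1))) hk']
        rw [erase_erase_comm, mul_pow, mul_comm]
      rw [hsplit]
      rw [CTQ_mul_eliminate
        (zeroAt_prod fun i hi => zeroAt_pow (zeroAt_prod fun j hj =>
          zeroAt_F (Finset.mem_erase.mp hi).1
            (Finset.mem_erase.mp (Finset.mem_erase.mp hj).2).1) _)
        (Wk_prod fun i hi => Wk_pow (Wk_F (Finset.mem_erase.mp hi).1) _)]
      have hsum : ∑ i ∈ s.erase k, a i = ∑ i ∈ s, a i := by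
        have := Finset.add_sum_erase s a hk
        omega
      have hmeas : (∑ i ∈ s.erase k, a i) + (s.erase k).card ≤ N := by
        rw [hsum, Finset.card_erase_of_mem hk]
        have hc : 1 ≤ s.card := Finset.card_pos.mpr hs
        omega
      rw [ih (s.erase k) a hmeas, hsum]
      congr 1
      apply Finset.prod_erase
      rw [hak]
      norm_num
    · -- recursion case
      push_neg at hzero
      have ha1 : ∀ i ∈ s, 1 ≤ a i := fun i hi => Nat.one_le_iff_ne_zero.mpr (hzero i hi)
      set Q : ℕ → LQ := fun i => ∏ j ∈ s.erase i, (1 - XzQ i 1 * XzQ j (-1)) with hQ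
      have key := key_identity s hs
      have hA : ∏ i ∈ s, Q i ^ a i =
          (∏ i ∈ s, Q i ^ (a i - 1)) * ∏ i ∈ s, Q i := by
        rw [← Finset.prod_mul_distrib]
        apply Finset.prod_congr rfl
        intro i hi
        rw [← pow_succ]
        congr 1
        have := ha1 i hi
        omega
      have hB : ∀ k ∈ s,
          ∏ i ∈ s, Q i ^ (Function.update a k (a k - 1) i) =
          (∏ i ∈ s, Q i ^ (a i - 1)) * ∏ m ∈ s.erase k, Q m := by
        intro k hk
        rw [← Finset.mul_prod_erase s
          (fun i => Q i ^ (Function.update a k (a k - 1) i)) hk]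
        rw [← Finset.mul_prod_erase s (fun i => Q i ^ (a i - 1)) hk]
        simp only [Function.update_self]
        have h1 : ∏ i ∈ s.erase k, Q i ^ (Function.update a k (a k - 1) i) =
            (∏ i ∈ s.erase k, Q i ^ (a i - 1)) * ∏ i ∈ s.erase k, Q i := by
          rw [← Finset.prod_mul_distrib]
          apply Finset.prod_congr rfl
          intro i hi
          rw [Function.update_of_ne (Finset.mem_erase.mp hi).1]
          rw [← pow_succ]
          congr 1
          have := ha1 i (Finset.mem_erase.mp hi).2
          omega
        rw [h1]
        ring
      have hrec : ∏ i ∈ s, Q i ^ a i =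
          ∑ k ∈ s, ∏ i ∈ s, Q i ^ (Function.update a k (a k - 1) i) := by
        rw [Finset.sum_congr rfl hB, ← Finset.mul_sum, key, hA]
      rw [hrec, CTQ_sum]
      set M := ∑ i ∈ s, a i with hM
      have hM1 : 1 ≤ M := by
        obtain ⟨k, hk⟩ := hs
        calc 1 ≤ a k := ha1 k hk
          _ ≤ M := Finset.single_le_sum (fun i _ => Nat.zero_le (a i)) hk
      have hterm : ∀ k ∈ s,
          CTQ (∏ i ∈ s, Q i ^ (Function.update a k (a k - 1) i)) =
            (a k : ℚ) * ((M - 1).factorial : ℚ) / ∏ i ∈ s, ((a i).factorial : ℚ) := by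
        intro k hk
        have hsumb : ∑ i ∈ s, Function.update a k (a k - 1) i = M - 1 := by
          rw [Finset.sum_update_of_mem hk, ← Finset.erase_eq]
          have h2 := Finset.add_sum_erase s a hk
          have h3 := ha1 k hk
          omega
        have hmeas : (∑ i ∈ s, Function.update a k (a k - 1) i) + s.card ≤ N := by
          rw [hsumb]
          omega
        rw [ih s (Function.update a k (a k - 1)) hmeas, hsumb]
        have hprodb : ∏ i ∈ s, (((Function.update a k (a k - 1) i).factorial : ℚ)) =
            ((a k - 1).factorial : ℚ) * ∏ i ∈ s.erase k, ((a i).factorial : ℚ) := by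
          rw [← Finset.mul_prod_erase s
            (fun i => (((Function.update a k (a k - 1) i).factorial : ℚ))) hk]
          simp only [Function.update_self]
          congr 1
          apply Finset.prod_congr rfl
          intro i hi
          rw [Function.update_of_ne (Finset.mem_erase.mp hi).1]
        rw [hprodb]
        have hfull : ∏ i ∈ s, ((a i).factorial : ℚ) =
            (a k : ℚ) * (((a k - 1).factorial : ℚ) * ∏ i ∈ s.erase k, ((a i).factorial : ℚ)) := by
          rw [← Finset.mul_prod_erase s (fun i => ((a i).factorial : ℚ)) hk]
          rw [← mul_assoc]
          congr 1
          rw [← Nat.cast_mul, Nat.mul_factorial_pred (hzero k hk)]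
        rw [hfull]
        have hc : (a k : ℚ) ≠ 0 := Nat.cast_ne_zero.mpr (hzero k hk)
        rw [mul_div_mul_left _ _ hc]
      rw [Finset.sum_congr rfl hterm]
      rw [← Finset.sum_div, ← Finset.sum_mul]
      have hcast : ∑ k ∈ s, (a k : ℚ) = (M : ℚ) := by
        rw [hM]
        push_cast
        rfl
      rw [hcast, ← Nat.cast_mul, Nat.mul_factorial_pred (by omega)]

/-- **Dyson's constant-term identity** (Dyson's ex-conjecture, proved by
Gunson and Wilson): for nonnegative integers `a_1,…,a_n`,
`CT ∏_{1≤i≠j≤n} (1 - x_i/x_j)^{a_i} = (a_1+⋯+a_n)! / (a_1! ⋯ a_n!)`. -/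
theorem dyson_identity (n : ℕ) (a : ℕ → ℕ) :
    CTQ (∏ ij ∈ (Finset.Icc 1 n ×ˢ Finset.Icc 1 n).filter (fun ij => ij.1 ≠ ij.2),
        (1 - XzQ ij.1 1 * XzQ ij.2 (-1)) ^ a ij.1) =
      (Nat.factorial (∑ i ∈ Finset.Icc 1 n, a i) : ℚ) /
        ∏ i ∈ Finset.Icc 1 n, (Nat.factorial (a i) : ℚ) := by
  classical
  have h := dyson_general ((∑ i ∈ Finset.Icc 1 n, a i) + (Finset.Icc 1 n).card)
    (Finset.Icc 1 n) a le_rfl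
  rw [← h]
  congr 1
  rw [Finset.prod_filter, Finset.prod_product]
  apply Finset.prod_congr rfl
  intro i _
  rw [← Finset.prod_pow]
  calc ∏ j ∈ Finset.Icc 1 n,
        (if (i, j).1 ≠ (i, j).2 then (1 - XzQ (i, j).1 1 * XzQ (i, j).2 (-1)) ^ a (i, j).1 else 1)
      = ∏ j ∈ (Finset.Icc 1 n).erase i,
        (if (i, j).1 ≠ (i, j).2 then (1 - XzQ (i, j).1 1 * XzQ (i, j).2 (-1)) ^ a (i, j).1 else 1) := by
        refine (Finset.prod_erase _ ?_).symm
        simp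
    _ = ∏ j ∈ (Finset.Icc 1 n).erase i, (1 - XzQ i 1 * XzQ j (-1)) ^ a i := by
        apply Finset.prod_congr rfl
        intro j hj
        have : i ≠ j := fun hc => (Finset.mem_erase.mp hj).1 hc.symm
        rw [if_pos this]

end
end
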